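/- arXiv:2007.15705 — 7 statements merged into one kernel-verified Lean document; each statement's English description precedes it below -/
import Mathlib

section
/- Let G₁ = (V₁, Σ, R₁, S₁) and G₂ = (V₂, Γ, R₂, S₂) be right-linear grammars (with Γ = {u, d}), and let G = (V₁ × V₂, Σ, R, (S₁, S₂)) be the linear grammar whose rules are: (A, B) → a(C, D) whenever A → aC ∈ R₁ and B → uD ∈ R₂; (A, B) → (C, D)a whenever A → aC ∈ R₁ and B → dD ∈ R₂; and (A, B) → ε whenever A → ε ∈ R₁ and B → ε ∈ R₂. Then for any nonterminals A₁ ∈ V₁ and A₂ ∈ V₂, the language generated by G starting from (A₁, A₂) equals { h(w, v) : w^R ∈ L(G₁ from A₁), v^R ∈ L(G₂ from A₂), |w| = |v| }, where w^R denotes the reversal of w. -/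
/-- The folding direction alphabet Γ = {u, d}. -/
inductive FDir : Type
  | up : FDir
  | down : FDir
  deriving DecidableEq

/-- Auxiliary folding function operating on reversed words. -/
def foldRev {α : Type} : List α → List FDir → Option (List α)
  | [], [] => some []
  | a :: w, b :: v =>
      (foldRev w v).map fun x =>
        match b with
        | FDir.up => a :: x
        | FDir.down => x ++ [a]
  | _, _ => none

/-- The folding function `h : Σ* × Γ* → Σ*` (partial, modeled with `Option`):
`h(ε, ε) = ε`; for `a ∈ Σ`, `h(w·a, v·u) = a·h(w, v)` and `h(w·a, v·d) = h(w, v)·a`;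
`h(w, v)` is undefined (`none`) when `|w| ≠ |v|`. -/
def foldWord {α : Type} (w : List α) (v : List FDir) : Option (List α) :=
  foldRev w.reverse v.reverse

/-- The right-hand side of a linear grammar rule: `A → uBv` or `A → u`. -/
inductive LinearRhs (T N : Type) : Type
  | nt (u : List T) (B : N) (v : List T)
  | tm (u : List T)

/-- A linear context-free grammar: every rule has the form `A → uBv` or `A → u`,
where `u, v` are terminal words and `A, B` are nonterminals. -/
structure LinearGrammar (T : Type) : Type 1 where
  NT : Type
  initial : NT
  rules : List (NT × LinearRhs T NT)

/-- Derivability of a terminal word from a nonterminal in a linear grammar. -/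
inductive LinearGrammar.DerivesFrom {T : Type} (g : LinearGrammar T) : g.NT → List T → Prop
  | tm {A : g.NT} {u : List T} :
      (A, LinearRhs.tm u) ∈ g.rules → LinearGrammar.DerivesFrom g A u
  | nt {A : g.NT} {B : g.NT} {u v w : List T} :
      (A, LinearRhs.nt u B v) ∈ g.rules → LinearGrammar.DerivesFrom g B w →
      LinearGrammar.DerivesFrom g A (u ++ w ++ v)

/-- The language generated by a linear grammar. -/
def LinearGrammar.language {T : Type} (g : LinearGrammar T) : Language T :=
  { w | g.DerivesFrom g.initial w }

/-- A language is linear context-free if it is generated by some linear grammar. -/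
def Language.IsLinear {T : Type} (L : Language T) : Prop :=
  ∃ g : LinearGrammar T, g.language = L

/-- The right-hand side of a right-linear grammar rule: `A → aB` or `A → ε`. -/
inductive RightLinearRhs (T N : Type) : Type
  | step (a : T) (B : N)
  | eps

/-- A right-linear grammar. -/
structure RightLinearGrammar (T : Type) : Type 1 where
  NT : Type
  initial : NT
  rules : List (NT × RightLinearRhs T NT)

/-- Derivability of a terminal word from a nonterminal in a right-linear grammar. -/
inductive RightLinearGrammar.DerivesFrom {T : Type} (g : RightLinearGrammar T) :
    g.NT → List T → Prop
  | eps {A : g.NT} :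
      (A, RightLinearRhs.eps) ∈ g.rules → RightLinearGrammar.DerivesFrom g A []
  | step {A B : g.NT} {a : T} {w : List T} :
      (A, RightLinearRhs.step a B) ∈ g.rules → RightLinearGrammar.DerivesFrom g B w →
      RightLinearGrammar.DerivesFrom g A (a :: w)

/-- The linear grammar `G = (V₁ × V₂, Σ, R, (S₁, S₂))` of the construction:
`(A, B) → a(C, D)` whenever `A → aC ∈ R₁` and `B → uD ∈ R₂`;
`(A, B) → (C, D)a` whenever `A → aC ∈ R₁` and `B → dD ∈ R₂`;
`(A, B) → ε` whenever `A → ε ∈ R₁` and `B → ε ∈ R₂`. -/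
def foldGrammar {T : Type} (g₁ : RightLinearGrammar T) (g₂ : RightLinearGrammar FDir) :
    LinearGrammar T where
  NT := g₁.NT × g₂.NT
  initial := (g₁.initial, g₂.initial)
  rules := g₁.rules.flatMap fun r₁ => g₂.rules.filterMap fun r₂ =>
    match r₁, r₂ with
    | (A, RightLinearRhs.step a C), (B, RightLinearRhs.step FDir.up D) =>
        some ((A, B), LinearRhs.nt [a] (C, D) [])
    | (A, RightLinearRhs.step a C), (B, RightLinearRhs.step FDir.down D) =>
        some ((A, B), LinearRhs.nt [] (C, D) [a])
    | (A, RightLinearRhs.eps), (B, RightLinearRhs.eps) =>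
        some ((A, B), LinearRhs.tm [])
    | _, _ => none

lemma mem_foldGrammar_rules_up {T : Type} {g₁ : RightLinearGrammar T}
    {g₂ : RightLinearGrammar FDir} {A C : g₁.NT} {B D : g₂.NT} {a : T}
    (h₁ : (A, RightLinearRhs.step a C) ∈ g₁.rules)
    (h₂ : (B, RightLinearRhs.step FDir.up D) ∈ g₂.rules) :
    ((A, B), LinearRhs.nt [a] (C, D) []) ∈ (foldGrammar g₁ g₂).rules := by
  simp only [foldGrammar, List.mem_flatMap, List.mem_filterMap]
  exact List.mem_flatMap.2 ⟨_, h₁, List.mem_filterMap.2 ⟨_, h₂, rfl⟩⟩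

lemma mem_foldGrammar_rules_down {T : Type} {g₁ : RightLinearGrammar T}
    {g₂ : RightLinearGrammar FDir} {A C : g₁.NT} {B D : g₂.NT} {a : T}
    (h₁ : (A, RightLinearRhs.step a C) ∈ g₁.rules)
    (h₂ : (B, RightLinearRhs.step FDir.down D) ∈ g₂.rules) :
    ((A, B), LinearRhs.nt [] (C, D) [a]) ∈ (foldGrammar g₁ g₂).rules := by
  simp only [foldGrammar, List.mem_flatMap, List.mem_filterMap]
  exact List.mem_flatMap.2 ⟨_, h₁, List.mem_filterMap.2 ⟨_, h₂, rfl⟩⟩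

lemma mem_foldGrammar_rules_eps {T : Type} {g₁ : RightLinearGrammar T}
    {g₂ : RightLinearGrammar FDir} {A : g₁.NT} {B : g₂.NT}
    (h₁ : (A, RightLinearRhs.eps) ∈ g₁.rules)
    (h₂ : (B, RightLinearRhs.eps) ∈ g₂.rules) :
    ((A, B), LinearRhs.tm ([] : List T)) ∈ (foldGrammar g₁ g₂).rules := by
  simp only [foldGrammar, List.mem_flatMap, List.mem_filterMap]
  exact List.mem_flatMap.2 ⟨_, h₁, List.mem_filterMap.2 ⟨_, h₂, rfl⟩⟩

lemma foldGrammar_rules_inv {T : Type} {g₁ : RightLinearGrammar T}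
    {g₂ : RightLinearGrammar FDir}
    {p : g₁.NT × g₂.NT} {r : LinearRhs T (g₁.NT × g₂.NT)}
    (h : (p, r) ∈ (foldGrammar g₁ g₂).rules) :
    (∃ a C D, (p.1, RightLinearRhs.step a C) ∈ g₁.rules ∧
        (p.2, RightLinearRhs.step FDir.up D) ∈ g₂.rules ∧
        r = LinearRhs.nt [a] (C, D) []) ∨
    (∃ a C D, (p.1, RightLinearRhs.step a C) ∈ g₁.rules ∧
        (p.2, RightLinearRhs.step FDir.down D) ∈ g₂.rules ∧
        r = LinearRhs.nt [] (C, D) [a]) ∨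
    ((p.1, RightLinearRhs.eps) ∈ g₁.rules ∧
        (p.2, RightLinearRhs.eps) ∈ g₂.rules ∧ r = LinearRhs.tm []) := by
  simp only [foldGrammar, List.mem_flatMap, List.mem_filterMap] at h
  obtain ⟨⟨A, rhs₁⟩, h₁, heq⟩ := List.mem_flatMap.1 h
  obtain ⟨⟨B, rhs₂⟩, h₂, heq⟩ := List.mem_filterMap.1 heq
  cases rhs₁ with
  | step a C =>
    cases rhs₂ with
    | step b D =>
      cases b with
      | up =>
        simp only [Option.some.injEq, Prod.mk.injEq] at heq
        obtain ⟨hp, hr⟩ := heq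
        subst hp; subst hr
        exact Or.inl ⟨a, C, D, h₁, h₂, rfl⟩
      | down =>
        simp only [Option.some.injEq, Prod.mk.injEq] at heq
        obtain ⟨hp, hr⟩ := heq
        subst hp; subst hr
        exact Or.inr (Or.inl ⟨a, C, D, h₁, h₂, rfl⟩)
    | eps => simp at heq
  | eps =>
    cases rhs₂ with
    | step b D => cases b <;> simp at heq
    | eps =>
      simp only [Option.some.injEq, Prod.mk.injEq] at heq
      obtain ⟨hp, hr⟩ := heq
      subst hp; subst hr
      exact Or.inr (Or.inr ⟨h₁, h₂, rfl⟩)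

lemma foldGrammar_aux_back {T : Type} {g₁ : RightLinearGrammar T}
    {g₂ : RightLinearGrammar FDir} {p₁ : g₁.NT} {p₂ : g₂.NT}
    {W : List T} {V : List FDir} {s : List T}
    (hW : g₁.DerivesFrom p₁ W) (hV : g₂.DerivesFrom p₂ V)
    (hlen : W.length = V.length) (hf : foldRev W V = some s) :
    (foldGrammar g₁ g₂).DerivesFrom (p₁, p₂) s := by
  induction hW generalizing V s p₂ with
  | @eps A h₁ =>
    have : V = [] := List.length_eq_zero_iff.mp hlen.symm
    subst this
    cases hV with
    | eps h₂ =>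
      simp only [foldRev, Option.some.injEq] at hf
      subst hf
      exact .tm (mem_foldGrammar_rules_eps h₁ h₂)
  | @step A C a W' h₁ _ ih =>
    cases V with
    | nil => simp at hlen
    | cons b V' =>
      cases hV with
      | @step _ D _ _ h₂ hV' =>
        simp only [foldRev, Option.map_eq_some_iff] at hf
        obtain ⟨x, hx, hs⟩ := hf
        cases b with
        | up =>
          subst hs
          have := LinearGrammar.DerivesFrom.nt
            (mem_foldGrammar_rules_up h₁ h₂)
            (ih hV' (by simpa using hlen) hx)
          simpa using this
        | down =>
          subst hs
          have := LinearGrammar.DerivesFrom.nt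
            (mem_foldGrammar_rules_down h₁ h₂)
            (ih hV' (by simpa using hlen) hx)
          simpa using this

lemma foldGrammar_aux {T : Type} (g₁ : RightLinearGrammar T)
    (g₂ : RightLinearGrammar FDir) (p : g₁.NT × g₂.NT) (s : List T) :
    (foldGrammar g₁ g₂).DerivesFrom p s ↔
      ∃ (W : List T) (V : List FDir), g₁.DerivesFrom p.1 W ∧ g₂.DerivesFrom p.2 V ∧
        W.length = V.length ∧ foldRev W V = some s := by
  constructor
  · intro h
    revert p
    intro (p : (foldGrammar g₁ g₂).NT) h
    induction h with
    | tm hr =>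
      rcases foldGrammar_rules_inv hr with ⟨a, C, D, _, _, heq⟩ |
        ⟨a, C, D, _, _, heq⟩ | ⟨h₁, h₂, heq⟩
      · exact absurd heq (by simp)
      · exact absurd heq (by simp)
      · cases heq
        exact ⟨[], [], .eps h₁, .eps h₂, rfl, rfl⟩
    | nt hr _ ih =>
      rcases foldGrammar_rules_inv hr with ⟨a, C, D, h₁, h₂, heq⟩ |
        ⟨a, C, D, h₁, h₂, heq⟩ | ⟨_, _, heq⟩
      · cases heq
        obtain ⟨W, V, hW, hV, hlen, hf⟩ := ih
        refine ⟨a :: W, FDir.up :: V, .step h₁ hW, .step h₂ hV, by simp [hlen], ?_⟩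
        simp [foldRev, hf]
      · cases heq
        obtain ⟨W, V, hW, hV, hlen, hf⟩ := ih
        refine ⟨a :: W, FDir.down :: V, .step h₁ hW, .step h₂ hV, by simp [hlen], ?_⟩
        simp [foldRev, hf]
      · exact absurd heq (by simp)
  · rintro ⟨W, V, hW, hV, hlen, hf⟩
    obtain ⟨p₁, p₂⟩ := p
    exact foldGrammar_aux_back hW hV hlen hf

/-- Claim of Theorem 1: for any nonterminals `A₁ ∈ V₁` and `A₂ ∈ V₂`, the language
generated by `G` starting from `(A₁, A₂)` equals
`{ h(w, v) : w^R ∈ L(G₁ from A₁), v^R ∈ L(G₂ from A₂), |w| = |v| }`. -/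
theorem foldGrammar_language {T : Type} (g₁ : RightLinearGrammar T)
    (g₂ : RightLinearGrammar FDir) (A₁ : g₁.NT) (A₂ : g₂.NT) :
    { s : List T | (foldGrammar g₁ g₂).DerivesFrom (A₁, A₂) s } =
    { s : List T | ∃ (w : List T) (v : List FDir),
        g₁.DerivesFrom A₁ w.reverse ∧ g₂.DerivesFrom A₂ v.reverse ∧
        w.length = v.length ∧ foldWord w v = some s } := by
  ext s
  simp only [Set.mem_setOf_eq, foldGrammar_aux, foldWord]
  constructor
  · rintro ⟨W, V, hW, hV, hlen, hf⟩
    exact ⟨W.reverse, V.reverse, by simpa using hW, by simpa using hV,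
      by simpa using hlen, by simpa using hf⟩
  · rintro ⟨w, v, hw, hv, hlen, hf⟩
    exact ⟨w.reverse, v.reverse, hw, hv, by simpa using hlen, hf⟩
end

section
/- Example 1: The F-system with core language L₁ = (abc)* and folding procedure language L₂ = (udd)* generates exactly the language { aⁿ(bc)ⁿ : n ≥ 0 }. That is, { h(w, v) : w ∈ (abc)*, v ∈ (udd)*, |w| = |v| } = { aⁿ(bc)ⁿ : n ≥ 0 }. -/
/-- The alphabet Σ = {a, b, c}. -/
inductive SymABC : Type
  | a : SymABC
  | b : SymABC
  | c : SymABC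
  deriving DecidableEq

lemma fold_step {α : Type} (w : List α) (v : List FDir) (x y z : α) :
    foldWord (w ++ [x, y, z]) (v ++ [FDir.up, FDir.down, FDir.down]) =
      (foldWord w v).map (fun s => x :: (s ++ [y, z])) := by
  unfold foldWord
  simp only [List.reverse_append]
  cases h : foldRev w.reverse v.reverse <;>
    simp [foldRev, h, Option.map_map, Function.comp]

lemma fold_main (n : ℕ) :
    foldWord ((List.replicate n [SymABC.a, SymABC.b, SymABC.c]).flatten)
        ((List.replicate n [FDir.up, FDir.down, FDir.down]).flatten) =
      some (List.replicate n SymABC.a ++ (List.replicate n [SymABC.b, SymABC.c]).flatten) := by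
  induction n with
  | zero => rfl
  | succ n ih =>
      rw [List.replicate_succ' (n := n), List.replicate_succ' (n := n),
        List.flatten_append, List.flatten_append]
      simp only [List.flatten_cons, List.flatten_nil, List.append_nil]
      rw [fold_step, ih]
      rw [List.replicate_succ, List.replicate_succ' (n := n), List.flatten_append]
      simp

/-- Example 1: the F-system with core language `L₁ = (abc)*` and folding procedure
language `L₂ = (udd)*` generates exactly `{ aⁿ(bc)ⁿ : n ≥ 0 }`. -/
theorem example_abc_udd :
    { s : List SymABC | ∃ w ∈ { w : List SymABC | ∃ n : ℕ,
          w = (List.replicate n [SymABC.a, SymABC.b, SymABC.c]).flatten },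
        ∃ v ∈ { v : List FDir | ∃ n : ℕ,
          v = (List.replicate n [FDir.up, FDir.down, FDir.down]).flatten },
        w.length = v.length ∧ foldWord w v = some s } =
    { s : List SymABC | ∃ n : ℕ,
        s = List.replicate n SymABC.a ++ (List.replicate n [SymABC.b, SymABC.c]).flatten } := by
  ext s
  simp only [Set.mem_setOf_eq]
  constructor
  · rintro ⟨w, ⟨n, rfl⟩, v, ⟨m, rfl⟩, hlen, hfold⟩
    simp [List.length_flatten] at hlen
    subst hlen
    rw [fold_main] at hfold
    exact ⟨n, (Option.some_injective _ hfold).symm⟩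
  · rintro ⟨n, rfl⟩
    exact ⟨_, ⟨n, rfl⟩, _, ⟨n, rfl⟩, by simp [List.length_flatten], fold_main n⟩
end

section
/- Theorem 2 (main part): The language L = { aⁿ#(bc)ⁿ : n ≥ 1 } ∪ { (de)ⁿ#fⁿ : n ≥ 1 } over the alphabet Σ = {a, b, c, d, e, f, #} is not generated by any F-system with regular core and regular folding procedure languages. That is, there is no pair of regular languages L₁ ⊆ Σ* and L₂ ⊆ Γ* such that L = { h(w, v) : w ∈ L₁, v ∈ L₂, |w| = |v| }. -/
/-- The language of the F-system Φ = (L₁, L₂):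
`L(Φ) = { h(w, v) : w ∈ L₁, v ∈ L₂, |w| = |v| }`. -/
def FLang {α : Type} (L₁ : Language α) (L₂ : Language FDir) : Language α :=
  { s | ∃ w ∈ L₁, ∃ v ∈ L₂, w.length = v.length ∧ foldWord w v = some s }

/-- The alphabet Σ = {a, b, c, d, e, f, #} (`hash` stands for `#`). -/
inductive Sym7 : Type
  | a : Sym7
  | b : Sym7
  | c : Sym7
  | d : Sym7
  | e : Sym7
  | f : Sym7
  | hash : Sym7
  deriving DecidableEq

/-- The language `L = { aⁿ#(bc)ⁿ : n ≥ 1 } ∪ { (de)ⁿ#fⁿ : n ≥ 1 }`. -/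
def Lpaper : Language Sym7 :=
  { s | (∃ n : ℕ, 1 ≤ n ∧
      s = List.replicate n Sym7.a ++ [Sym7.hash] ++
          (List.replicate n [Sym7.b, Sym7.c]).flatten) ∨
    (∃ n : ℕ, 1 ≤ n ∧
      s = (List.replicate n [Sym7.d, Sym7.e]).flatten ++ [Sym7.hash] ++
          List.replicate n Sym7.f) }

namespace NotF

variable {α : Type}

def upP (l : List (α × FDir)) : List α :=
  l.filterMap fun p => if p.2 = FDir.up then some p.1 else none

def dnP (l : List (α × FDir)) : List α :=
  l.filterMap fun p => if p.2 = FDir.down then some p.1 else none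

@[simp] lemma upP_nil : upP ([] : List (α × FDir)) = [] := rfl
@[simp] lemma dnP_nil : dnP ([] : List (α × FDir)) = [] := rfl

@[simp] lemma upP_cons_up (a : α) (l : List (α × FDir)) :
    upP ((a, FDir.up) :: l) = a :: upP l := by simp [upP]

@[simp] lemma upP_cons_dn (a : α) (l : List (α × FDir)) :
    upP ((a, FDir.down) :: l) = upP l := by simp [upP]

@[simp] lemma dnP_cons_up (a : α) (l : List (α × FDir)) :
    dnP ((a, FDir.up) :: l) = dnP l := by simp [dnP]

@[simp] lemma dnP_cons_dn (a : α) (l : List (α × FDir)) :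
    dnP ((a, FDir.down) :: l) = a :: dnP l := by simp [dnP]

lemma upP_append (l l' : List (α × FDir)) : upP (l ++ l') = upP l ++ upP l' := by
  simp [upP, List.filterMap_append]

lemma dnP_append (l l' : List (α × FDir)) : dnP (l ++ l') = dnP l ++ dnP l' := by
  simp [dnP, List.filterMap_append]

lemma foldRev_eq : ∀ (w : List α) (v : List FDir), w.length = v.length →
    foldRev w v = some (upP (w.zip v) ++ (dnP (w.zip v)).reverse)
  | [], [], _ => rfl
  | a :: w, b :: v, h => by
      have h' : w.length = v.length := by simpa using h
      rw [foldRev, foldRev_eq w v h']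
      cases b <;> simp [List.zip_cons_cons]

lemma zip_rev : ∀ (w : List α) {β : Type} (v : List β), w.length = v.length →
    w.reverse.zip v.reverse = (w.zip v).reverse
  | [], _, [], _ => rfl
  | a :: w, _, b :: v, h => by
      have h' : w.length = v.length := by simpa using h
      simp only [List.reverse_cons]
      rw [List.zip_append (by simp [h']), zip_rev w v h']
      simp

theorem foldWord_eq (w : List α) (v : List FDir) (h : w.length = v.length) :
    foldWord w v = some ((upP (w.zip v)).reverse ++ dnP (w.zip v)) := by
  unfold foldWord
  rw [foldRev_eq _ _ (by simp [h]), zip_rev w v h]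
  unfold upP dnP
  rw [List.filterMap_reverse, List.filterMap_reverse]
  simp

lemma upP_dnP_perm : ∀ (l : List (α × FDir)), (upP l ++ dnP l).Perm (l.map Prod.fst)
  | [] => by simp
  | (a, FDir.up) :: l => by simpa using (upP_dnP_perm l).cons a
  | (a, FDir.down) :: l => by
      simpa using List.perm_middle.trans ((upP_dnP_perm l).cons a)

theorem count_foldWord [DecidableEq α] {w r : List α} {v : List FDir}
    (h : w.length = v.length) (hr : foldWord w v = some r) (x : α) :
    r.count x = w.count x := by
  rw [foldWord_eq w v h] at hr
  obtain rfl : _ = r := Option.some.inj hr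
  have hperm := (upP_dnP_perm (w.zip v)).count_eq x
  rw [List.map_fst_zip (le_of_eq h)] at hperm
  simpa [List.count_append, List.count_reverse] using hperm

theorem length_foldWord {w r : List α} {v : List FDir}
    (h : w.length = v.length) (hr : foldWord w v = some r) :
    r.length = w.length := by
  rw [foldWord_eq w v h] at hr
  obtain rfl : _ = r := Option.some.inj hr
  have hperm := (upP_dnP_perm (w.zip v)).length_eq
  rw [List.map_fst_zip (le_of_eq h)] at hperm
  simpa using hperm

lemma mem_upP {x : α} {l : List (α × FDir)} (hx : x ∈ upP l) : x ∈ l.map Prod.fst := by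
  obtain ⟨p, hp, hpx⟩ := List.mem_filterMap.1 hx
  by_cases h : p.2 = FDir.up <;> simp [h] at hpx
  exact hpx ▸ List.mem_map_of_mem hp

lemma mem_dnP {x : α} {l : List (α × FDir)} (hx : x ∈ dnP l) : x ∈ l.map Prod.fst := by
  obtain ⟨p, hp, hpx⟩ := List.mem_filterMap.1 hx
  by_cases h : p.2 = FDir.down <;> simp [h] at hpx
  exact hpx ▸ List.mem_map_of_mem hp

lemma length_upP : ∀ (w : List α) (v : List FDir), w.length = v.length →
    (upP (w.zip v)).length = v.count FDir.up
  | [], [], _ => by simp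
  | a :: w, b :: v, h => by
      have h' : w.length = v.length := by simpa using h
      cases b <;> simp [List.zip_cons_cons, length_upP w v h', List.count_cons]

lemma length_dnP : ∀ (w : List α) (v : List FDir), w.length = v.length →
    (dnP (w.zip v)).length = v.count FDir.down
  | [], [], _ => by simp
  | a :: w, b :: v, h => by
      have h' : w.length = v.length := by simpa using h
      cases b <;> simp [List.zip_cons_cons, length_dnP w v h', List.count_cons]

lemma count_up_down (v : List FDir) : v.count FDir.up + v.count FDir.down = v.length := by
  induction v with
  | nil => simp
  | cons b v ih => cases b <;> simp [List.count_cons] <;> omega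

theorem fold_split [DecidableEq α] (hsh : α) (wa wb : List α) (va vb : List FDir) (μ : FDir)
    (h1 : wa.length = va.length) (h2 : wb.length = vb.length) :
    ∃ A B : List α,
      foldWord (wa ++ hsh :: wb) (va ++ μ :: vb) = some (A ++ hsh :: B) ∧
      A.length = (if μ = FDir.up then 0 else va.length) + vb.count FDir.up ∧
      (∀ x, x ∈ A → x ∈ wa ∨ x ∈ wb) ∧ (∀ x, x ∈ B → x ∈ wa ∨ x ∈ wb) := by
  have hlen : (wa ++ hsh :: wb).length = (va ++ μ :: vb).length := by
    simp [h1, h2]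
  have hz : (wa ++ hsh :: wb).zip (va ++ μ :: vb) = wa.zip va ++ (hsh, μ) :: wb.zip vb := by
    rw [List.zip_append h1, List.zip_cons_cons]
  have hfold := foldWord_eq (wa ++ hsh :: wb) (va ++ μ :: vb) hlen
  rw [hz] at hfold
  have hmemA : ∀ x, x ∈ upP (wa.zip va) → x ∈ wa := by
    intro x hx
    have := mem_upP hx
    rwa [List.map_fst_zip (le_of_eq h1)] at this
  have hmemB : ∀ x, x ∈ upP (wb.zip vb) → x ∈ wb := by
    intro x hx
    have := mem_upP hx
    rwa [List.map_fst_zip (le_of_eq h2)] at this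
  have hmemDA : ∀ x, x ∈ dnP (wa.zip va) → x ∈ wa := by
    intro x hx
    have := mem_dnP hx
    rwa [List.map_fst_zip (le_of_eq h1)] at this
  have hmemDB : ∀ x, x ∈ dnP (wb.zip vb) → x ∈ wb := by
    intro x hx
    have := mem_dnP hx
    rwa [List.map_fst_zip (le_of_eq h2)] at this
  cases μ with
  | up =>
      refine ⟨(upP (wb.zip vb)).reverse,
        (upP (wa.zip va)).reverse ++ (dnP (wa.zip va) ++ dnP (wb.zip vb)), ?_, ?_, ?_, ?_⟩
      · rw [hfold]
        congr 1
        rw [upP_append, dnP_append, upP_cons_up, dnP_cons_up]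
        simp [List.reverse_append]
      · simp [length_upP wb vb h2]
      · intro x hx; exact Or.inr (hmemB x (by simpa using hx))
      · intro x hx
        simp only [List.mem_append, List.mem_reverse] at hx
        rcases hx with h | h | h
        · exact Or.inl (hmemA x h)
        · exact Or.inl (hmemDA x h)
        · exact Or.inr (hmemDB x h)
  | down =>
      refine ⟨(upP (wb.zip vb)).reverse ++ ((upP (wa.zip va)).reverse ++ dnP (wa.zip va)),
        dnP (wb.zip vb), ?_, ?_, ?_, ?_⟩
      · rw [hfold]
        congr 1
        rw [upP_append, dnP_append, upP_cons_dn, dnP_cons_dn]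
        simp [List.reverse_append]
      · have := count_up_down va
        have h3 := length_upP wa va h1
        have h4 := length_dnP wa va h1
        have h5 := length_upP wb vb h2
        simp only [List.length_append, List.length_reverse]
        simp [h3, h4, h5]
        omega
      · intro x hx
        simp only [List.mem_append, List.mem_reverse] at hx
        rcases hx with h | h | h
        · exact Or.inr (hmemB x h)
        · exact Or.inl (hmemA x h)
        · exact Or.inl (hmemDA x h)
      · intro x hx; exact Or.inr (hmemDB x hx)

end NotF

namespace NotF

variable {β : Type}

def pow (l : List β) (k : ℕ) : List β := (List.replicate k l).flatten

@[simp] lemma pow_zero (l : List β) : pow l 0 = [] := rfl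

lemma pow_succ (l : List β) (k : ℕ) : pow l (k + 1) = l ++ pow l k := by
  rw [pow, List.replicate_succ, List.flatten_cons]; rfl

@[simp] lemma pow_one (l : List β) : pow l 1 = l := by simp [pow_succ]

lemma pow_add (l : List β) (m k : ℕ) : pow l (m + k) = pow l m ++ pow l k := by
  rw [pow, List.replicate_add, List.flatten_append]; rfl

lemma length_pow (l : List β) (k : ℕ) : (pow l k).length = k * l.length := by
  induction k with
  | zero => simp
  | succ k ih => rw [pow_succ]; simp [ih]; ring

lemma count_pow [DecidableEq β] (x : β) (l : List β) (k : ℕ) :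
    (pow l k).count x = k * l.count x := by
  induction k with
  | zero => simp
  | succ k ih => rw [pow_succ]; simp [List.count_append, ih]; ring

lemma mem_pow {x : β} {l : List β} {k : ℕ} (hx : x ∈ pow l k) : x ∈ l := by
  obtain ⟨t, ht, hxt⟩ := List.mem_flatten.1 hx
  rwa [(List.eq_of_mem_replicate ht : t = l)] at hxt

/-- Pumping lemma packaged for regular languages. -/
lemma pump {L : Language β} (hreg : L.IsRegular) :
    ∃ p : ℕ, ∀ w ∈ L, p ≤ w.length →
      ∃ x y z : List β, w = x ++ y ++ z ∧ y ≠ [] ∧ ∀ k, x ++ pow y k ++ z ∈ L := by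
  obtain ⟨σ, fin, M, hM⟩ := hreg
  refine ⟨Fintype.card σ, fun w hw hlen => ?_⟩
  obtain ⟨x, y, z, hsplit, -, hyne, hsub⟩ := M.pumping_lemma (x := w) (by rw [hM]; exact hw) hlen
  refine ⟨x, y, z, hsplit, hyne, fun k => ?_⟩
  rw [← hM]
  apply hsub
  have hy : pow y k ∈ KStar.kstar ({y} : Language β) := by
    rw [Language.mem_kstar]
    exact ⟨List.replicate k y, rfl,
      fun t ht => Set.mem_singleton_iff.2 (List.eq_of_mem_replicate ht)⟩
  show (x ++ pow y k ++ z) ∈ ({x} * KStar.kstar ({y} : Language β) * {z} : Language β)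
  rw [Language.mem_mul]
  refine ⟨x ++ pow y k, ?_, z, rfl, by simp⟩
  rw [Language.mem_mul]
  exact ⟨x, rfl, pow y k, hy, rfl⟩

lemma exists_first {x : β} : ∀ {l : List β}, x ∈ l → ∃ s t, l = s ++ x :: t ∧ x ∉ s := by
  intro l
  induction l with
  | nil => intro h; cases h
  | cons a l ih =>
      intro h
      by_cases hax : a = x
      · exact ⟨[], l, by simp [hax], by simp⟩
      · obtain ⟨s, t, hst, hxs⟩ := ih (by
          rcases List.mem_cons.1 h with h' | h'
          · exact absurd h'.symm hax
          · exact h')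
        refine ⟨a :: s, t, by simp [hst], ?_⟩
        simp only [List.mem_cons]
        rintro (h' | h')
        · exact hax h'.symm
        · exact hxs h'

lemma split_unique (h : β) : ∀ (A : List β) (A' B B' : List β),
    A ++ h :: B = A' ++ h :: B' → h ∉ A → h ∉ A' → A = A'
  | [], [], _, _, _, _, _ => rfl
  | [], a' :: A', B, B', e, _, hA' => by
      simp only [List.nil_append, List.cons_append, List.cons.injEq] at e
      exact absurd (e.1 ▸ (List.mem_cons_self : a' ∈ a' :: A') : h ∈ a' :: A') hA'
  | a :: A, [], B, B', e, hA, _ => by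
      simp only [List.nil_append, List.cons_append, List.cons.injEq] at e
      exact absurd (e.1 ▸ (List.mem_cons_self : a ∈ a :: A) : h ∈ a :: A) hA
  | a :: A, a' :: A', B, B', e, hA, hA' => by
      simp only [List.cons_append, List.cons.injEq] at e
      have := split_unique h A A' B B' e.2 (fun hh => hA (List.mem_cons_of_mem _ hh))
        (fun hh => hA' (List.mem_cons_of_mem _ hh))
      rw [e.1, this]

end NotF

namespace NotF

lemma list_split_at {β : Type} (l : List β) (i : ℕ) (h : i < l.length) :
    l = l.take i ++ l[i] :: l.drop (i + 1) := by
  conv_lhs => rw [← List.take_append_drop i l, List.drop_eq_getElem_cons h]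

lemma split_concat {β : Type} (l : List β) (i : ℕ) (h : i < l.length) (P : List β) :
    l ++ P = l.take i ++ l[i] :: (l.drop (i + 1) ++ P) := by
  conv_lhs => rw [list_split_at l i h]
  simp only [List.cons_append, List.append_assoc]

lemma length_take_of_le {β : Type} {l : List β} {i : ℕ} (h : i ≤ l.length) :
    (l.take i).length = i := by
  simp [List.length_take]; omega

/-- Key splitting lemma: the pumped word `x ++ y^(1+s) ++ z` split at position
`P₀ + ε*(|y|*s)` has an eventually-constant mark and affine up-count of the suffix. -/
lemma pump_split (x y z : List FDir) (P₀ ε : ℕ) (hy : 1 ≤ y.length) (hε : ε ≤ 1)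
    (hP : P₀ < x.length + y.length + z.length) :
    ∃ (s₀ : ℕ) (μ : FDir) (c : ℕ), ∀ s, s₀ ≤ s →
      ∃ va vb, x ++ pow y (1 + s) ++ z = va ++ μ :: vb ∧
        va.length = P₀ + ε * (y.length * s) ∧
        vb.count FDir.up = c + (1 - ε) * ((s - s₀) * y.count FDir.up) := by
  interval_cases ε
  · -- ε = 0 : split point is fixed at P₀
    by_cases hx : P₀ < x.length
    · refine ⟨0, x[P₀], (x.drop (P₀ + 1)).count FDir.up + y.count FDir.up
        + z.count FDir.up, fun s _ => ?_⟩
      refine ⟨x.take P₀, x.drop (P₀ + 1) ++ (pow y (1 + s) ++ z), ?_, ?_, ?_⟩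
      · simp only [List.append_assoc]
        rw [split_concat x P₀ hx (pow y (1 + s) ++ z)]
      · simp [length_take_of_le (le_of_lt hx)]
      · simp only [List.count_append, count_pow, Nat.sub_zero]
        have h1 : (1 + s) * (y.count FDir.up) = y.count FDir.up + s * y.count FDir.up := by
          ring
        omega
    · push_neg at hx
      obtain ⟨q, r, hr, hq⟩ : ∃ q r, r < y.length ∧ y.length * q + r = P₀ - x.length :=
        ⟨(P₀ - x.length) / y.length, (P₀ - x.length) % y.length,
          Nat.mod_lt _ (by omega), Nat.div_add_mod _ _⟩
      refine ⟨q, y[r], (y.drop (r + 1)).count FDir.up + z.count FDir.up, fun s hs => ?_⟩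
      refine ⟨x ++ (pow y q ++ y.take r),
        y.drop (r + 1) ++ (pow y (s - q) ++ z), ?_, ?_, ?_⟩
      · have h1 : 1 + s = q + (1 + (s - q)) := by omega
        rw [h1, pow_add, pow_add, pow_one]
        simp only [List.append_assoc]
        rw [split_concat y r hr (pow y (s - q) ++ z)]
      · simp only [List.length_append, length_pow, length_take_of_le hr.le]
        have h2 : q * y.length = y.length * q := Nat.mul_comm _ _
        simp only [Nat.mul_zero, Nat.zero_mul, Nat.add_zero]
        omega
      · simp only [List.count_append, count_pow, Nat.sub_zero]
        omega
  · -- ε = 1 : split point moves with s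
    by_cases hz : x.length + y.length ≤ P₀
    · -- inside z
      have hiz : P₀ - x.length - y.length < z.length := by omega
      refine ⟨0, z[P₀ - x.length - y.length],
        (z.drop (P₀ - x.length - y.length + 1)).count FDir.up, fun s _ => ?_⟩
      refine ⟨x ++ (pow y (1 + s) ++ z.take (P₀ - x.length - y.length)),
        z.drop (P₀ - x.length - y.length + 1), ?_, ?_, ?_⟩
      · conv_lhs => rw [list_split_at z _ hiz]
        simp only [List.cons_append, List.append_assoc]
      · simp only [List.length_append, length_pow, length_take_of_le hiz.le]
        have h1 : (1 + s) * y.length = y.length + s * y.length := by ring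
        have h2 : y.length * s = s * y.length := Nat.mul_comm _ _
        omega
      · simp
    · push_neg at hz
      by_cases hxy : x.length ≤ P₀
      · -- inside the y-block, offset r = P₀ - |x| < |y|
        have hr : P₀ - x.length < y.length := by omega
        refine ⟨0, y[P₀ - x.length],
          (y.drop (P₀ - x.length + 1)).count FDir.up + z.count FDir.up, fun s _ => ?_⟩
        refine ⟨x ++ (pow y s ++ y.take (P₀ - x.length)),
          y.drop (P₀ - x.length + 1) ++ z, ?_, ?_, ?_⟩
        · have h1 : 1 + s = s + 1 := by omega
          rw [h1, pow_add, pow_one]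
          simp only [List.append_assoc]
          rw [split_concat y (P₀ - x.length) hr z]
        · simp only [List.length_append, length_pow, length_take_of_le hr.le]
          have h2 : y.length * s = s * y.length := Nat.mul_comm _ _
          omega
        · simp
      · -- P₀ < |x| : offset wraps around, constant shift q
        push_neg at hxy
        obtain ⟨q, hq1, hq2⟩ : ∃ q, x.length - P₀ ≤ y.length * q ∧
            y.length * q < (x.length - P₀) + y.length := by
          refine ⟨(x.length - P₀ + y.length - 1) / y.length, ?_, ?_⟩ <;>
          · have h1 := Nat.div_add_mod (x.length - P₀ + y.length - 1) y.length
            have h2 : (x.length - P₀ + y.length - 1) % y.length < y.length :=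
              Nat.mod_lt _ (by omega)
            omega
        obtain ⟨r, hr1, hr2⟩ : ∃ r, r + (x.length - P₀) = y.length * q ∧ r < y.length :=
          ⟨y.length * q - (x.length - P₀), by omega, by omega⟩
        refine ⟨q, y[r], (y.drop (r + 1)).count FDir.up + q * y.count FDir.up
          + z.count FDir.up, fun s hs => ?_⟩
        refine ⟨x ++ (pow y (s - q) ++ y.take r),
          y.drop (r + 1) ++ (pow y q ++ z), ?_, ?_, ?_⟩
        · have h1 : 1 + s = (s - q) + (1 + q) := by omega
          rw [h1, pow_add, pow_add, pow_one]
          simp only [List.append_assoc]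
          rw [split_concat y r hr2 (pow y q ++ z)]
        · simp only [List.length_append, length_pow, length_take_of_le hr2.le]
          have h1 : (s - q) * y.length + q * y.length = s * y.length := by
            rw [← Nat.add_mul]; congr 1; omega
          have h2 : y.length * s = s * y.length := Nat.mul_comm _ _
          have h3 : y.length * q = q * y.length := Nat.mul_comm _ _
          omega
        · simp only [List.count_append, count_pow]
          omega

end NotF

namespace NotF

lemma flatten_rep_eq_pow {β : Type} (l : List β) (n : ℕ) :
    (List.replicate n l).flatten = pow l n := rfl

lemma Lpaper_count_hash {s : List Sym7} (hs : s ∈ Lpaper) :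
    s.count Sym7.hash = 1 := by
  rcases hs with ⟨n, hn, rfl⟩ | ⟨n, hn, rfl⟩ <;>
    simp [List.count_append, flatten_rep_eq_pow, count_pow, List.count_replicate]

lemma struct1 {s : List Sym7} (hs : s ∈ Lpaper) (hd : Sym7.d ∉ s) :
    ∃ m A B, 1 ≤ m ∧ s.length = 3 * m + 1 ∧ s = A ++ Sym7.hash :: B ∧
      Sym7.hash ∉ A ∧ Sym7.hash ∉ B ∧ A.length = m := by
  rcases hs with ⟨n, hn, rfl⟩ | ⟨n, hn, rfl⟩
  · refine ⟨n, List.replicate n Sym7.a, (List.replicate n [Sym7.b, Sym7.c]).flatten,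
      hn, ?_, ?_, ?_, ?_, ?_⟩
    · simp [flatten_rep_eq_pow, length_pow]
      omega
    · simp
    · simp [List.mem_replicate]
    · intro hmem
      simpa using mem_pow (l := [Sym7.b, Sym7.c]) hmem
    · simp
  · exfalso
    apply hd
    simp only [List.mem_append]
    left; left
    obtain ⟨m, rfl⟩ : ∃ m, n = m + 1 := ⟨n - 1, by omega⟩
    show Sym7.d ∈ pow [Sym7.d, Sym7.e] (m + 1)
    rw [pow_succ]
    simp

lemma struct2 {s : List Sym7} (hs : s ∈ Lpaper) (ha : Sym7.a ∉ s) :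
    ∃ m A B, 1 ≤ m ∧ s.length = 3 * m + 1 ∧ s = A ++ Sym7.hash :: B ∧
      Sym7.hash ∉ A ∧ Sym7.hash ∉ B ∧ A.length = 2 * m := by
  rcases hs with ⟨n, hn, rfl⟩ | ⟨n, hn, rfl⟩
  · exfalso
    apply ha
    simp only [List.mem_append]
    left; left
    simp [List.mem_replicate]
    omega
  · refine ⟨n, (List.replicate n [Sym7.d, Sym7.e]).flatten, List.replicate n Sym7.f,
      hn, ?_, ?_, ?_, ?_, ?_⟩
    · simp [flatten_rep_eq_pow, length_pow]
      omega
    · simp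
    · intro hmem
      simpa using mem_pow (l := [Sym7.d, Sym7.e]) hmem
    · simp [List.mem_replicate]
    · simp [flatten_rep_eq_pow, length_pow]
      omega

lemma slope_helper (μ : FDir) (ε P cst s₀ u ℓ lam T n g : ℕ)
    (hg : 1 ≤ g) (hε : ε ≤ 1) (hT : 1 ≤ T) (hlam : 1 ≤ lam) (hs : s₀ ≤ 3 * lam * T)
    (h1 : (if μ = FDir.up then 0 else P + ε * (ℓ * (3 * lam * T))) +
      (cst + (1 - ε) * ((3 * lam * T - s₀) * u)) = g * (n + ℓ * lam * T))
    (h2 : (if μ = FDir.up then 0 else P + ε * (ℓ * (3 * lam * (2 * T)))) +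
      (cst + (1 - ε) * ((3 * lam * (2 * T) - s₀) * u)) = g * (n + ℓ * lam * (2 * T))) :
    3 * u = g * ℓ ∨ g * ℓ = 0 ∨ 3 * ℓ = g * ℓ := by
  obtain ⟨A, hA⟩ : ∃ A, A = lam * T := ⟨lam * T, rfl⟩
  have hApos : 1 ≤ A := by rw [hA]; exact Nat.one_le_iff_ne_zero.2 (by positivity)
  have r1 : 3 * lam * T = 3 * A := by rw [hA]; ring
  have r2 : 3 * lam * (2 * T) = 6 * A := by rw [hA]; ring
  have r3 : g * (n + ℓ * lam * T) = g * n + g * (ℓ * A) := by rw [hA]; ring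
  have r4 : g * (n + ℓ * lam * (2 * T)) = g * n + 2 * (g * (ℓ * A)) := by rw [hA]; ring
  rw [r1, r3] at h1
  rw [r2, r4] at h2
  rw [r1] at hs
  have hxu : (6 * A - s₀) * u = (3 * A - s₀) * u + 3 * (A * u) := by
    have h6 : 6 * A - s₀ = (3 * A - s₀) + 3 * A := by omega
    rw [h6, Nat.add_mul]
    ring_nf
  have hl3 : ℓ * (3 * A) = 3 * (ℓ * A) := by ring
  have hl6 : ℓ * (6 * A) = 6 * (ℓ * A) := by ring
  cases μ with
  | up =>
      rw [if_pos rfl] at h1; rw [if_pos rfl] at h2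
      interval_cases ε
      · simp only [Nat.sub_zero, Nat.one_mul, Nat.zero_add] at h1 h2
        have key : 3 * (A * u) = g * (ℓ * A) := by omega
        left
        have : (3 * u) * A = (g * ℓ) * A := by
          calc (3 * u) * A = 3 * (A * u) := by ring
            _ = g * (ℓ * A) := key
            _ = (g * ℓ) * A := by ring
        exact Nat.eq_of_mul_eq_mul_right (by omega) this
      · simp only [Nat.sub_self, Nat.zero_mul, Nat.add_zero, Nat.zero_add] at h1 h2
        have key : g * (ℓ * A) = 0 := by omega
        rcases Nat.mul_eq_zero.1 key with h | h
        · omega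
        · rcases Nat.mul_eq_zero.1 h with h' | h'
          · right; left; rw [h']; ring
          · omega
  | down =>
      simp only [if_neg (by simp : ¬(FDir.down = FDir.up))] at h1 h2
      interval_cases ε
      · simp only [Nat.sub_zero, Nat.one_mul, Nat.zero_mul, Nat.add_zero] at h1 h2
        have key : 3 * (A * u) = g * (ℓ * A) := by omega
        left
        have : (3 * u) * A = (g * ℓ) * A := by
          calc (3 * u) * A = 3 * (A * u) := by ring
            _ = g * (ℓ * A) := key
            _ = (g * ℓ) * A := by ring
        exact Nat.eq_of_mul_eq_mul_right (by omega) this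
      · simp only [Nat.sub_self, Nat.zero_mul, Nat.add_zero, Nat.one_mul] at h1 h2
        rw [hl3] at h1
        rw [hl6] at h2
        have key : 3 * (ℓ * A) = g * (ℓ * A) := by omega
        by_cases hℓ : ℓ = 0
        · right; left; rw [hℓ]; ring
        · have h3g : 3 = g := Nat.eq_of_mul_eq_mul_right (by positivity) key
          right; right; rw [← h3g]

end NotF

/-- Theorem 2 (main part): the language `L = { aⁿ#(bc)ⁿ : n ≥ 1 } ∪ { (de)ⁿ#fⁿ : n ≥ 1 }`
is not generated by any F-system with regular core and regular folding procedure
languages. -/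
theorem Lpaper_not_fsystem :
    ¬ ∃ (L₁ : Language Sym7) (L₂ : Language FDir),
        L₁.IsRegular ∧ L₂.IsRegular ∧ FLang L₁ L₂ = Lpaper := by
  rintro ⟨L₁, L₂, hreg1, hreg2, hEq⟩
  obtain ⟨p₁, hpump₁⟩ := NotF.pump hreg1
  obtain ⟨p₂, hpump₂⟩ := NotF.pump hreg2
  set n : ℕ := p₁ + p₂ + 1 with hndef
  have hn : 1 ≤ n := by omega
  -- the two sample words in Lpaper
  have hs₁p : (List.replicate n Sym7.a ++ [Sym7.hash] ++
      (List.replicate n [Sym7.b, Sym7.c]).flatten) ∈ Lpaper := Or.inl ⟨n, hn, rfl⟩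
  have hs₂p : ((List.replicate n [Sym7.d, Sym7.e]).flatten ++ [Sym7.hash] ++
      List.replicate n Sym7.f) ∈ Lpaper := Or.inr ⟨n, hn, rfl⟩
  have hs₁ := hs₁p; have hs₂ := hs₂p
  rw [← hEq] at hs₁ hs₂
  obtain ⟨w₁, hw₁L, v, hvL, hlen₁, hfold₁⟩ := hs₁
  obtain ⟨w₂, hw₂L, v₂, hv₂L, hlen₂, hfold₂⟩ := hs₂
  -- lengths of the samples
  have hs₁len : (List.replicate n Sym7.a ++ [Sym7.hash] ++
      (List.replicate n [Sym7.b, Sym7.c]).flatten).length = 3 * n + 1 := by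
    simp [NotF.flatten_rep_eq_pow, NotF.length_pow]
    omega
  have hs₂len : ((List.replicate n [Sym7.d, Sym7.e]).flatten ++ [Sym7.hash] ++
      List.replicate n Sym7.f).length = 3 * n + 1 := by
    simp [NotF.flatten_rep_eq_pow, NotF.length_pow]
    omega
  have hw₁len : w₁.length = 3 * n + 1 := by
    have := NotF.length_foldWord hlen₁ hfold₁
    omega
  have hw₂len : w₂.length = 3 * n + 1 := by
    have := NotF.length_foldWord hlen₂ hfold₂
    omega
  have hvlen : v.length = 3 * n + 1 := by omega
  -- counts
  have hw₁hash : w₁.count Sym7.hash = 1 := by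
    have h := NotF.count_foldWord hlen₁ hfold₁ Sym7.hash
    rw [← h]
    exact NotF.Lpaper_count_hash hs₁p
  have hw₂hash : w₂.count Sym7.hash = 1 := by
    have h := NotF.count_foldWord hlen₂ hfold₂ Sym7.hash
    rw [← h]
    exact NotF.Lpaper_count_hash hs₂p
  have hw₁d : w₁.count Sym7.d = 0 := by
    have h := NotF.count_foldWord hlen₁ hfold₁ Sym7.d
    rw [← h]
    simp [List.count_append, List.count_replicate, NotF.flatten_rep_eq_pow, NotF.count_pow]
  have hw₂a : w₂.count Sym7.a = 0 := by
    have h := NotF.count_foldWord hlen₂ hfold₂ Sym7.a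
    rw [← h]
    simp [List.count_append, List.count_replicate, NotF.flatten_rep_eq_pow, NotF.count_pow]
  -- pump the three words
  obtain ⟨x₁, y₁, z₁, hw₁split, hy₁ne, hw₁pump⟩ := hpump₁ w₁ hw₁L (by omega)
  obtain ⟨x₂, y₂, z₂, hw₂split, hy₂ne, hw₂pump⟩ := hpump₁ w₂ hw₂L (by omega)
  obtain ⟨x, y, z, hvsplit, hyne, hvpump⟩ := hpump₂ v hvL (by omega)
  have hl : 1 ≤ y.length := List.length_pos_iff.2 hyne
  have hl₁ : 1 ≤ y₁.length := List.length_pos_iff.2 hy₁ne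
  have hl₂ : 1 ≤ y₂.length := List.length_pos_iff.2 hy₂ne
  have hvbase : x.length + y.length + z.length = 3 * n + 1 := by
    have := congrArg List.length hvsplit
    simp at this
    omega
  have hw₁base : x₁.length + y₁.length + z₁.length = 3 * n + 1 := by
    have := congrArg List.length hw₁split
    simp at this
    omega
  have hw₂base : x₂.length + y₂.length + z₂.length = 3 * n + 1 := by
    have := congrArg List.length hw₂split
    simp at this
    omega
  -- lengths of pumped words
  have lenW₁ : ∀ τ : ℕ,
      (x₁ ++ NotF.pow y₁ (1 + 3 * (y.length * y₂.length) * τ) ++ z₁).length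
        = 3 * (n + y.length * (y₁.length * y₂.length) * τ) + 1 := by
    intro τ
    simp only [List.length_append, NotF.length_pow]
    have h1 : (1 + 3 * (y.length * y₂.length) * τ) * y₁.length
        = y₁.length + 3 * (y.length * (y₁.length * y₂.length) * τ) := by ring
    have h2 : 3 * (n + y.length * (y₁.length * y₂.length) * τ)
        = 3 * n + 3 * (y.length * (y₁.length * y₂.length) * τ) := by ring
    omega
  have lenW₂ : ∀ τ : ℕ,
      (x₂ ++ NotF.pow y₂ (1 + 3 * (y.length * y₁.length) * τ) ++ z₂).length
        = 3 * (n + y.length * (y₁.length * y₂.length) * τ) + 1 := by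
    intro τ
    simp only [List.length_append, NotF.length_pow]
    have h1 : (1 + 3 * (y.length * y₁.length) * τ) * y₂.length
        = y₂.length + 3 * (y.length * (y₁.length * y₂.length) * τ) := by ring
    have h2 : 3 * (n + y.length * (y₁.length * y₂.length) * τ)
        = 3 * n + 3 * (y.length * (y₁.length * y₂.length) * τ) := by ring
    omega
  have lenV : ∀ τ : ℕ,
      (x ++ NotF.pow y (1 + 3 * (y₁.length * y₂.length) * τ) ++ z).length
        = 3 * (n + y.length * (y₁.length * y₂.length) * τ) + 1 := by
    intro τ
    simp only [List.length_append, NotF.length_pow]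
    have h1 : (1 + 3 * (y₁.length * y₂.length) * τ) * y.length
        = y.length + 3 * (y.length * (y₁.length * y₂.length) * τ) := by ring
    have h2 : 3 * (n + y.length * (y₁.length * y₂.length) * τ)
        = 3 * n + 3 * (y.length * (y₁.length * y₂.length) * τ) := by ring
    omega
  have lens₁ : ∀ τ : ℕ,
      (x₁ ++ NotF.pow y₁ (1 + 3 * (y.length * y₂.length) * τ) ++ z₁).length
        = (x ++ NotF.pow y (1 + 3 * (y₁.length * y₂.length) * τ) ++ z).length := by
    intro τ; rw [lenW₁ τ, lenV τ]
  have lens₂ : ∀ τ : ℕ,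
      (x₂ ++ NotF.pow y₂ (1 + 3 * (y.length * y₁.length) * τ) ++ z₂).length
        = (x ++ NotF.pow y (1 + 3 * (y₁.length * y₂.length) * τ) ++ z).length := by
    intro τ; rw [lenW₂ τ, lenV τ]
  -- the folds of pumped pairs are in Lpaper
  have fold₁ : ∀ τ : ℕ, ∃ R : List Sym7,
      foldWord (x₁ ++ NotF.pow y₁ (1 + 3 * (y.length * y₂.length) * τ) ++ z₁)
        (x ++ NotF.pow y (1 + 3 * (y₁.length * y₂.length) * τ) ++ z) = some R ∧
      R ∈ Lpaper ∧
      (∀ q : Sym7, R.count q =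
        (x₁ ++ NotF.pow y₁ (1 + 3 * (y.length * y₂.length) * τ) ++ z₁).count q) ∧
      R.length = (x₁ ++ NotF.pow y₁ (1 + 3 * (y.length * y₂.length) * τ) ++ z₁).length := by
    intro τ
    have hlen := lens₁ τ
    refine ⟨_, NotF.foldWord_eq _ _ hlen, ?_, ?_, ?_⟩
    · rw [← hEq]
      exact ⟨_, hw₁pump _, _, hvpump _, hlen, NotF.foldWord_eq _ _ hlen⟩
    · exact NotF.count_foldWord hlen (NotF.foldWord_eq _ _ hlen)
    · exact NotF.length_foldWord hlen (NotF.foldWord_eq _ _ hlen)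
  have fold₂ : ∀ τ : ℕ, ∃ R : List Sym7,
      foldWord (x₂ ++ NotF.pow y₂ (1 + 3 * (y.length * y₁.length) * τ) ++ z₂)
        (x ++ NotF.pow y (1 + 3 * (y₁.length * y₂.length) * τ) ++ z) = some R ∧
      R ∈ Lpaper ∧
      (∀ q : Sym7, R.count q =
        (x₂ ++ NotF.pow y₂ (1 + 3 * (y.length * y₁.length) * τ) ++ z₂).count q) ∧
      R.length = (x₂ ++ NotF.pow y₂ (1 + 3 * (y.length * y₁.length) * τ) ++ z₂).length := by
    intro τ
    have hlen := lens₂ τ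
    refine ⟨_, NotF.foldWord_eq _ _ hlen, ?_, ?_, ?_⟩
    · rw [← hEq]
      exact ⟨_, hw₂pump _, _, hvpump _, hlen, NotF.foldWord_eq _ _ hlen⟩
    · exact NotF.count_foldWord hlen (NotF.foldWord_eq _ _ hlen)
    · exact NotF.length_foldWord hlen (NotF.foldWord_eq _ _ hlen)
  -- hash counts in the pieces
  have hw₁pieces : x₁.count Sym7.hash + y₁.count Sym7.hash + z₁.count Sym7.hash = 1 := by
    rw [hw₁split] at hw₁hash
    simp [List.count_append] at hw₁hash
    omega
  have hw₂pieces : x₂.count Sym7.hash + y₂.count Sym7.hash + z₂.count Sym7.hash = 1 := by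
    rw [hw₂split] at hw₂hash
    simp [List.count_append] at hw₂hash
    omega
  have hy₁hash : y₁.count Sym7.hash = 0 := by
    obtain ⟨R, hR, hRL, hRcnt, -⟩ := fold₁ 1
    have h1 : R.count Sym7.hash = 1 := NotF.Lpaper_count_hash hRL
    rw [hRcnt Sym7.hash] at h1
    simp only [List.count_append, NotF.count_pow] at h1
    have hexp : (1 + 3 * (y.length * y₂.length) * 1) * y₁.count Sym7.hash
        = y₁.count Sym7.hash + 3 * (y.length * y₂.length) * y₁.count Sym7.hash := by ring
    have hK : 1 ≤ 3 * (y.length * y₂.length) := Nat.mul_pos (by omega) (Nat.mul_pos hl hl₂)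
    have hzero : 3 * (y.length * y₂.length) * y₁.count Sym7.hash = 0 := by omega
    rcases Nat.mul_eq_zero.1 hzero with h | h
    · omega
    · exact h
  have hy₂hash : y₂.count Sym7.hash = 0 := by
    obtain ⟨R, hR, hRL, hRcnt, -⟩ := fold₂ 1
    have h1 : R.count Sym7.hash = 1 := NotF.Lpaper_count_hash hRL
    rw [hRcnt Sym7.hash] at h1
    simp only [List.count_append, NotF.count_pow] at h1
    have hexp : (1 + 3 * (y.length * y₁.length) * 1) * y₂.count Sym7.hash
        = y₂.count Sym7.hash + 3 * (y.length * y₁.length) * y₂.count Sym7.hash := by ring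
    have hK : 1 ≤ 3 * (y.length * y₁.length) := Nat.mul_pos (by omega) (Nat.mul_pos hl hl₁)
    have hzero : 3 * (y.length * y₁.length) * y₂.count Sym7.hash = 0 := by omega
    rcases Nat.mul_eq_zero.1 hzero with h | h
    · omega
    · exact h
  -- d-counts in pieces of w₁, a-counts in pieces of w₂
  have hw₁dpieces : x₁.count Sym7.d = 0 ∧ y₁.count Sym7.d = 0 ∧ z₁.count Sym7.d = 0 := by
    rw [hw₁split] at hw₁d
    simp [List.count_append] at hw₁d
    omega
  have hw₂apieces : x₂.count Sym7.a = 0 ∧ y₂.count Sym7.a = 0 ∧ z₂.count Sym7.a = 0 := by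
    rw [hw₂split] at hw₂a
    simp [List.count_append] at hw₂a
    omega
  -- decomposition of pumped w₁ around its unique hash
  have decomp₁ : ∃ P ε : ℕ, ε ≤ 1 ∧ P < 3 * n + 1 ∧ ∀ τ : ℕ, ∃ wa wb : List Sym7,
      x₁ ++ NotF.pow y₁ (1 + 3 * (y.length * y₂.length) * τ) ++ z₁
        = wa ++ Sym7.hash :: wb ∧ Sym7.hash ∉ wa ∧ Sym7.hash ∉ wb ∧
      wa.length = P + ε * (y.length * (3 * (y₁.length * y₂.length) * τ)) := by
    rcases Nat.lt_or_ge 0 (x₁.count Sym7.hash) with hcx | hcx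
    · -- hash in x₁
      have hmem : Sym7.hash ∈ x₁ := List.count_pos_iff.1 hcx
      obtain ⟨xa, xb, hxeq, hxa⟩ := NotF.exists_first hmem
      have hxa0 : xa.count Sym7.hash = 0 := List.count_eq_zero.2 hxa
      have hxb0 : xb.count Sym7.hash = 0 := by
        rw [hxeq] at hw₁pieces
        simp [List.count_append, List.count_cons] at hw₁pieces
        omega
      refine ⟨xa.length, 0, by omega, ?_, fun τ => ?_⟩
      · have := congrArg List.length hxeq
        simp at this
        omega
      · refine ⟨xa, xb ++ (NotF.pow y₁ (1 + 3 * (y.length * y₂.length) * τ) ++ z₁),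
          ?_, hxa, ?_, by simp⟩
        · rw [hxeq]
          simp only [List.cons_append, List.append_assoc]
        · intro hc
          have : (xb ++ (NotF.pow y₁ (1 + 3 * (y.length * y₂.length) * τ) ++ z₁)).count
              Sym7.hash = 0 := by
            simp only [List.count_append, NotF.count_pow, hxb0, hy₁hash]
            have : z₁.count Sym7.hash = 0 := by
              rw [hxeq] at hw₁pieces
              simp [List.count_append, List.count_cons] at hw₁pieces
              omega
            omega
          exact List.count_eq_zero.1 this hc
    · -- hash in z₁
      have hcz : 0 < z₁.count Sym7.hash := by omega
      have hmem : Sym7.hash ∈ z₁ := List.count_pos_iff.1 hcz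
      obtain ⟨za, zb, hzeq, hza⟩ := NotF.exists_first hmem
      have hza0 : za.count Sym7.hash = 0 := List.count_eq_zero.2 hza
      have hzb0 : zb.count Sym7.hash = 0 := by
        rw [hzeq] at hw₁pieces
        simp [List.count_append, List.count_cons] at hw₁pieces
        omega
      refine ⟨x₁.length + y₁.length + za.length, 1, le_refl 1, ?_, fun τ => ?_⟩
      · have := congrArg List.length hzeq
        simp at this
        omega
      · refine ⟨x₁ ++ (NotF.pow y₁ (1 + 3 * (y.length * y₂.length) * τ) ++ za), zb,
          ?_, ?_, ?_, ?_⟩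
        · rw [hzeq]
          simp only [List.cons_append, List.append_assoc]
        · intro hc
          have h0 : (x₁ ++ (NotF.pow y₁ (1 + 3 * (y.length * y₂.length) * τ) ++ za)).count
              Sym7.hash = 0 := by
            simp only [List.count_append, NotF.count_pow, hza0, hy₁hash]
            omega
          exact List.count_eq_zero.1 h0 hc
        · exact List.count_eq_zero.1 hzb0
        · simp only [List.length_append, NotF.length_pow]
          have h1 : (1 + 3 * (y.length * y₂.length) * τ) * y₁.length
              = y₁.length + y.length * (3 * (y₁.length * y₂.length) * τ) := by ring
          omega
  -- decomposition of pumped w₂ around its unique hash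
  have decomp₂ : ∃ P ε : ℕ, ε ≤ 1 ∧ P < 3 * n + 1 ∧ ∀ τ : ℕ, ∃ wa wb : List Sym7,
      x₂ ++ NotF.pow y₂ (1 + 3 * (y.length * y₁.length) * τ) ++ z₂
        = wa ++ Sym7.hash :: wb ∧ Sym7.hash ∉ wa ∧ Sym7.hash ∉ wb ∧
      wa.length = P + ε * (y.length * (3 * (y₁.length * y₂.length) * τ)) := by
    rcases Nat.lt_or_ge 0 (x₂.count Sym7.hash) with hcx | hcx
    · have hmem : Sym7.hash ∈ x₂ := List.count_pos_iff.1 hcx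
      obtain ⟨xa, xb, hxeq, hxa⟩ := NotF.exists_first hmem
      have hxa0 : xa.count Sym7.hash = 0 := List.count_eq_zero.2 hxa
      have hxb0 : xb.count Sym7.hash = 0 := by
        rw [hxeq] at hw₂pieces
        simp [List.count_append, List.count_cons] at hw₂pieces
        omega
      refine ⟨xa.length, 0, by omega, ?_, fun τ => ?_⟩
      · have := congrArg List.length hxeq
        simp at this
        omega
      · refine ⟨xa, xb ++ (NotF.pow y₂ (1 + 3 * (y.length * y₁.length) * τ) ++ z₂),
          ?_, hxa, ?_, by simp⟩
        · rw [hxeq]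
          simp only [List.cons_append, List.append_assoc]
        · intro hc
          have h0 : (xb ++ (NotF.pow y₂ (1 + 3 * (y.length * y₁.length) * τ) ++ z₂)).count
              Sym7.hash = 0 := by
            simp only [List.count_append, NotF.count_pow, hxb0, hy₂hash]
            have : z₂.count Sym7.hash = 0 := by
              rw [hxeq] at hw₂pieces
              simp [List.count_append, List.count_cons] at hw₂pieces
              omega
            omega
          exact List.count_eq_zero.1 h0 hc
    · have hcz : 0 < z₂.count Sym7.hash := by omega
      have hmem : Sym7.hash ∈ z₂ := List.count_pos_iff.1 hcz
      obtain ⟨za, zb, hzeq, hza⟩ := NotF.exists_first hmem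
      have hza0 : za.count Sym7.hash = 0 := List.count_eq_zero.2 hza
      have hzb0 : zb.count Sym7.hash = 0 := by
        rw [hzeq] at hw₂pieces
        simp [List.count_append, List.count_cons] at hw₂pieces
        omega
      refine ⟨x₂.length + y₂.length + za.length, 1, le_refl 1, ?_, fun τ => ?_⟩
      · have := congrArg List.length hzeq
        simp at this
        omega
      · refine ⟨x₂ ++ (NotF.pow y₂ (1 + 3 * (y.length * y₁.length) * τ) ++ za), zb,
          ?_, ?_, ?_, ?_⟩
        · rw [hzeq]
          simp only [List.cons_append, List.append_assoc]
        · intro hc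
          have h0 : (x₂ ++ (NotF.pow y₂ (1 + 3 * (y.length * y₁.length) * τ) ++ za)).count
              Sym7.hash = 0 := by
            simp only [List.count_append, NotF.count_pow, hza0, hy₂hash]
            omega
          exact List.count_eq_zero.1 h0 hc
        · exact List.count_eq_zero.1 hzb0
        · simp only [List.length_append, NotF.length_pow]
          have h1 : (1 + 3 * (y.length * y₁.length) * τ) * y₂.length
              = y₂.length + y.length * (3 * (y₁.length * y₂.length) * τ) := by ring
          omega
  obtain ⟨P₁, ε₁, hε₁, hP₁, hdec₁⟩ := decomp₁
  obtain ⟨P₂, ε₂, hε₂, hP₂, hdec₂⟩ := decomp₂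
  obtain ⟨s₀₁, μ₁, c₁, hC₁⟩ := NotF.pump_split x y z P₁ ε₁ hl hε₁ (by omega)
  obtain ⟨s₀₂, μ₂, c₂, hC₂⟩ := NotF.pump_split x y z P₂ ε₂ hl hε₂ (by omega)
  -- the master equation for family 1
  have EQ₁ : ∀ τ : ℕ, s₀₁ ≤ 3 * (y₁.length * y₂.length) * τ →
      (if μ₁ = FDir.up then 0
        else P₁ + ε₁ * (y.length * (3 * (y₁.length * y₂.length) * τ))) +
      (c₁ + (1 - ε₁) * ((3 * (y₁.length * y₂.length) * τ - s₀₁) * y.count FDir.up)) =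
      1 * (n + y.length * (y₁.length * y₂.length) * τ) := by
    intro τ hτ
    obtain ⟨wa, wb, hWsplit, hhwa, hhwb, hwalen⟩ := hdec₁ τ
    obtain ⟨va, vb, hVsplit, hvalen, hvbcount⟩ := hC₁ (3 * (y₁.length * y₂.length) * τ) hτ
    have hwava : wa.length = va.length := by rw [hwalen, hvalen]
    have hwbvb : wb.length = vb.length := by
      have h1 := lens₁ τ
      rw [hWsplit, hVsplit] at h1
      simp at h1
      omega
    obtain ⟨A, B, hfold, hAlen, hmemA, hmemB⟩ :=
      NotF.fold_split Sym7.hash wa wb va vb μ₁ hwava hwbvb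
    obtain ⟨R, hR, hRL, hRcnt, hRlen⟩ := fold₁ τ
    rw [hWsplit, hVsplit, hfold] at hR
    obtain rfl : A ++ Sym7.hash :: B = R := Option.some.inj hR
    -- R contains no d
    have hdR : Sym7.d ∉ A ++ Sym7.hash :: B := by
      rw [← List.count_eq_zero (a := Sym7.d)]
      rw [hRcnt Sym7.d]
      simp only [List.count_append, NotF.count_pow,
        hw₁dpieces.1, hw₁dpieces.2.1, hw₁dpieces.2.2]
      omega
    obtain ⟨m, A', B', hm1, hmlen, hsplit', hhA', hhB', hA'len⟩ := NotF.struct1 hRL hdR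
    have hhA : Sym7.hash ∉ A := by
      intro hc
      rcases hmemA Sym7.hash hc with h | h
      · exact hhwa h
      · exact hhwb h
    have hAA' : A = A' := NotF.split_unique Sym7.hash A A' B B' hsplit' hhA hhA'
    have hm : m = n + y.length * (y₁.length * y₂.length) * τ := by
      rw [hRlen, lenW₁ τ] at hmlen
      omega
    have hfinal : A.length = n + y.length * (y₁.length * y₂.length) * τ := by
      rw [hAA', hA'len, hm]
    rw [hvalen, hvbcount] at hAlen
    rw [one_mul, ← hfinal]
    exact hAlen.symm
  -- the master equation for family 2
  have EQ₂ : ∀ τ : ℕ, s₀₂ ≤ 3 * (y₁.length * y₂.length) * τ →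
      (if μ₂ = FDir.up then 0
        else P₂ + ε₂ * (y.length * (3 * (y₁.length * y₂.length) * τ))) +
      (c₂ + (1 - ε₂) * ((3 * (y₁.length * y₂.length) * τ - s₀₂) * y.count FDir.up)) =
      2 * (n + y.length * (y₁.length * y₂.length) * τ) := by
    intro τ hτ
    obtain ⟨wa, wb, hWsplit, hhwa, hhwb, hwalen⟩ := hdec₂ τ
    obtain ⟨va, vb, hVsplit, hvalen, hvbcount⟩ := hC₂ (3 * (y₁.length * y₂.length) * τ) hτ
    have hwava : wa.length = va.length := by rw [hwalen, hvalen]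
    have hwbvb : wb.length = vb.length := by
      have h1 := lens₂ τ
      rw [hWsplit, hVsplit] at h1
      simp at h1
      omega
    obtain ⟨A, B, hfold, hAlen, hmemA, hmemB⟩ :=
      NotF.fold_split Sym7.hash wa wb va vb μ₂ hwava hwbvb
    obtain ⟨R, hR, hRL, hRcnt, hRlen⟩ := fold₂ τ
    rw [hWsplit, hVsplit, hfold] at hR
    obtain rfl : A ++ Sym7.hash :: B = R := Option.some.inj hR
    have haR : Sym7.a ∉ A ++ Sym7.hash :: B := by
      rw [← List.count_eq_zero (a := Sym7.a)]
      rw [hRcnt Sym7.a]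
      simp only [List.count_append, NotF.count_pow,
        hw₂apieces.1, hw₂apieces.2.1, hw₂apieces.2.2]
      omega
    obtain ⟨m, A', B', hm1, hmlen, hsplit', hhA', hhB', hA'len⟩ := NotF.struct2 hRL haR
    have hhA : Sym7.hash ∉ A := by
      intro hc
      rcases hmemA Sym7.hash hc with h | h
      · exact hhwa h
      · exact hhwb h
    have hAA' : A = A' := NotF.split_unique Sym7.hash A A' B B' hsplit' hhA hhA'
    have hm : m = n + y.length * (y₁.length * y₂.length) * τ := by
      rw [hRlen, lenW₂ τ] at hmlen
      omega
    have h2m : A.length = 2 * (n + y.length * (y₁.length * y₂.length) * τ) := by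
      rw [hAA', hA'len, hm]
    rw [hvalen, hvbcount] at hAlen
    rw [← h2m]
    exact hAlen.symm
  -- two-point evaluation and the final contradiction
  have hlam : 1 ≤ y₁.length * y₂.length := Nat.mul_pos hl₁ hl₂
  have hT1 : 1 ≤ s₀₁ + s₀₂ + 1 := by omega
  have hboundT : s₀₁ + s₀₂ + 1 ≤ 3 * (y₁.length * y₂.length) * (s₀₁ + s₀₂ + 1) :=
    Nat.le_mul_of_pos_left _ (Nat.mul_pos (by omega) hlam)
  have hbound2T : s₀₁ + s₀₂ + 1 ≤ 3 * (y₁.length * y₂.length) * (2 * (s₀₁ + s₀₂ + 1)) := by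
    calc s₀₁ + s₀₂ + 1 ≤ 3 * (y₁.length * y₂.length) * (s₀₁ + s₀₂ + 1) := hboundT
      _ ≤ 3 * (y₁.length * y₂.length) * (2 * (s₀₁ + s₀₂ + 1)) :=
        Nat.mul_le_mul_left _ (by omega)
  have S₁ := NotF.slope_helper μ₁ ε₁ P₁ c₁ s₀₁ (y.count FDir.up) y.length
    (y₁.length * y₂.length) (s₀₁ + s₀₂ + 1) n 1 (by omega) hε₁ hT1 hlam (by omega)
    (EQ₁ (s₀₁ + s₀₂ + 1) (by omega)) (EQ₁ (2 * (s₀₁ + s₀₂ + 1)) (by omega))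
  have S₂ := NotF.slope_helper μ₂ ε₂ P₂ c₂ s₀₂ (y.count FDir.up) y.length
    (y₁.length * y₂.length) (s₀₁ + s₀₂ + 1) n 2 (by omega) hε₂ hT1 hlam (by omega)
    (EQ₂ (s₀₁ + s₀₂ + 1) (by omega)) (EQ₂ (2 * (s₀₁ + s₀₂ + 1)) (by omega))
  rcases S₁ with h1 | h1 | h1 <;> rcases S₂ with h2 | h2 | h2 <;> omega
end

section
/- Theorem 2: The class of languages generated by F-systems with regular core and regular folding procedure languages is not equal to the class of linear context-free languages: there exists a linear context-free language that is not of the form { h(w, v) : w ∈ L₁, v ∈ L₂, |w| = |v| } for any regular languages L₁, L₂. -/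
namespace FoldProof

open List

/-! ### Basic fold lemmas -/

lemma foldRev_count : ∀ (w : List Sym7) (v : List FDir) (s : List Sym7),
    foldRev w v = some s → ∀ z : Sym7, s.count z = w.count z := by
  intro w
  induction w with
  | nil =>
    intro v s h z
    cases v with
    | nil => simp [foldRev] at h; subst h; rfl
    | cons b v => simp [foldRev] at h
  | cons a w ih =>
    intro v s h z
    cases v with
    | nil => simp [foldRev] at h
    | cons b v =>
      simp only [foldRev] at h
      rcases Option.map_eq_some_iff.mp h with ⟨s', hs', rfl⟩
      have := ih v s' hs' z
      cases b <;> simp [List.count_cons, List.count_append, this] <;> omega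

lemma foldRev_length : ∀ (w : List Sym7) (v : List FDir) (s : List Sym7),
    foldRev w v = some s → s.length = w.length := by
  intro w
  induction w with
  | nil =>
    intro v s h
    cases v with
    | nil => simp [foldRev] at h; subst h; rfl
    | cons b v => simp [foldRev] at h
  | cons a w ih =>
    intro v s h
    cases v with
    | nil => simp [foldRev] at h
    | cons b v =>
      simp only [foldRev] at h
      rcases Option.map_eq_some_iff.mp h with ⟨s', hs', rfl⟩
      have := ih v s' hs'
      cases b <;> simp [this]

lemma foldWord_count {w : List Sym7} {v : List FDir} {s : List Sym7}
    (h : foldWord w v = some s) (z : Sym7) : s.count z = w.count z := by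
  have := foldRev_count w.reverse v.reverse s h z
  simpa using this

lemma foldWord_length {w : List Sym7} {v : List FDir} {s : List Sym7}
    (h : foldWord w v = some s) : s.length = w.length := by
  have := foldRev_length w.reverse v.reverse s h
  simpa using this


lemma foldRev_replicate {α : Type} (c : α) :
    ∀ (V : List FDir), foldRev (List.replicate V.length c) V = some (List.replicate V.length c) := by
  intro V
  induction V with
  | nil => simp [foldRev]
  | cons b V ih =>
    cases b with
    | up => simp [List.replicate_succ, foldRev, ih]
    | down =>
      simp only [List.length_cons, List.replicate_succ, foldRev, ih, Option.map_some]
      rw [← List.replicate_succ', List.replicate_succ]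

lemma foldRev_marker {α : Type} (A M : α) :
    ∀ (V₁ : List FDir) (dir : FDir) (V₂ : List FDir),
      foldRev (List.replicate V₁.length A ++ M :: List.replicate V₂.length A)
          (V₁ ++ dir :: V₂) =
        some (List.replicate (V₁.count FDir.up) A ++
          (match dir with
            | FDir.up => M :: List.replicate V₂.length A
            | FDir.down => List.replicate V₂.length A ++ [M]) ++
          List.replicate (V₁.length - V₁.count FDir.up) A) := by
  intro V₁
  induction V₁ with
  | nil =>
    intro dir V₂
    cases dir <;> simp [foldRev, foldRev_replicate]
  | cons b V₁ ih =>
    intro dir V₂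
    have hcl : V₁.count FDir.up ≤ V₁.length := List.count_le_length
    cases b with
    | up =>
      have : foldRev (List.replicate (FDir.up :: V₁).length A ++ M :: List.replicate V₂.length A)
          ((FDir.up :: V₁) ++ dir :: V₂) =
          (foldRev (List.replicate V₁.length A ++ M :: List.replicate V₂.length A)
            (V₁ ++ dir :: V₂)).map fun x => A :: x := by
        simp [List.replicate_succ, foldRev]
      rw [this, ih dir V₂]
      have hc : (FDir.up :: V₁).count FDir.up = V₁.count FDir.up + 1 := by
        simp [List.count_cons]
      rw [hc]
      simp only [Option.map_some, List.length_cons]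
      congr 1
      have h1 : V₁.length + 1 - (V₁.count FDir.up + 1) = V₁.length - V₁.count FDir.up := by omega
      rw [h1, List.replicate_succ]
      simp [List.append_assoc]
    | down =>
      have : foldRev (List.replicate (FDir.down :: V₁).length A ++ M :: List.replicate V₂.length A)
          ((FDir.down :: V₁) ++ dir :: V₂) =
          (foldRev (List.replicate V₁.length A ++ M :: List.replicate V₂.length A)
            (V₁ ++ dir :: V₂)).map fun x => x ++ [A] := by
        simp [List.replicate_succ, foldRev]
      rw [this, ih dir V₂]
      have hc : (FDir.down :: V₁).count FDir.up = V₁.count FDir.up := by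
        simp [List.count_cons]
      rw [hc]
      simp only [Option.map_some, List.length_cons]
      congr 1
      have h1 : V₁.length + 1 - V₁.count FDir.up = (V₁.length - V₁.count FDir.up) + 1 := by omega
      rw [h1, List.replicate_succ' (n := V₁.length - V₁.count FDir.up)]
      simp [List.append_assoc]

/-- Number of `up`s among the last `m` letters of `v`. -/
def fpre (v : List FDir) (m : ℕ) : ℕ := (v.reverse.take m).count FDir.up

lemma fpre_le (v : List FDir) (m : ℕ) : fpre v m ≤ m := by
  have h1 : (v.reverse.take m).count FDir.up ≤ (v.reverse.take m).length :=
    List.count_le_length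
  have h2 : (v.reverse.take m).length ≤ m := by
    simp [List.length_take]
  exact le_trans h1 h2

lemma fpre_mono (v : List FDir) {m m' : ℕ} (h : m ≤ m') :
    fpre v m ≤ fpre v m' ∧ fpre v m' ≤ fpre v m + (m' - m) := by
  have h1 : v.reverse.take m ++ (v.reverse.take m').drop m = v.reverse.take m' := by
    have h2 := List.take_append_drop m (v.reverse.take m')
    rwa [List.take_take, min_eq_left h] at h2
  have hcnt : fpre v m' = fpre v m + ((v.reverse.take m').drop m).count FDir.up := by
    unfold fpre
    conv_lhs => rw [← h1]
    rw [List.count_append]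
  have hlen : ((v.reverse.take m').drop m).count FDir.up ≤ m' - m := by
    have hc := List.count_le_length (a := FDir.up) (l := (v.reverse.take m').drop m)
    have h2 : ((v.reverse.take m').drop m).length ≤ m' - m := by
      simp only [List.length_drop, List.length_take]
      omega
    omega
  omega

/-- Master lemma: folding a one-marker word computes to a one-marker word whose
marker position is `fpre v y` or `fpre v y + x`. -/
lemma foldWord_marker {α : Type} (A M : α) (x y : ℕ) (v : List FDir)
    (hv : v.length = x + y + 1) :
    ∃ pos : ℕ,
      foldWord (List.replicate x A ++ M :: List.replicate y A) v =
        some (List.replicate pos A ++ M :: List.replicate (x + y - pos) A) ∧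
      (pos = fpre v y ∨ pos = fpre v y + x) := by
  have hVlen : v.reverse.length = x + y + 1 := by simp [hv]
  have hylt : y < v.reverse.length := by omega
  have hdecomp : v.reverse = v.reverse.take y ++ v.reverse[y] :: v.reverse.drop (y + 1) := by
    conv_lhs => rw [← List.take_append_drop y v.reverse]
    rw [List.drop_eq_getElem_cons hylt]
  have hlen1 : (v.reverse.take y).length = y := by
    simp [List.length_take]; omega
  have hlen2 : (v.reverse.drop (y + 1)).length = x := by
    simp [List.length_drop]; omega
  have hwrev : (List.replicate x A ++ M :: List.replicate y A).reverse =
      List.replicate y A ++ M :: List.replicate x A := by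
    simp [List.reverse_append, List.reverse_replicate]
  have hfold : foldWord (List.replicate x A ++ M :: List.replicate y A) v =
      foldRev (List.replicate y A ++ M :: List.replicate x A)
        (v.reverse.take y ++ v.reverse[y] :: v.reverse.drop (y + 1)) := by
    unfold foldWord
    rw [hwrev, ← hdecomp]
  have hfy : fpre v y = (v.reverse.take y).count FDir.up := rfl
  have hfyle : fpre v y ≤ y := fpre_le v y
  cases hget : v.reverse[y] with
  | up =>
    have hmain := foldRev_marker A M (v.reverse.take y) FDir.up (v.reverse.drop (y + 1))
    rw [hlen1, hlen2] at hmain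
    rw [hget] at hfold
    refine ⟨fpre v y, ?_, Or.inl rfl⟩
    rw [hfold, hmain]
    congr 1
    rw [← hfy]
    have h3 : x + y - fpre v y = x + (y - fpre v y) := by omega
    rw [h3, List.replicate_add]
    simp [List.append_assoc]
  | down =>
    have hmain := foldRev_marker A M (v.reverse.take y) FDir.down (v.reverse.drop (y + 1))
    rw [hlen1, hlen2] at hmain
    rw [hget] at hfold
    refine ⟨fpre v y + x, ?_, Or.inr rfl⟩
    rw [hfold, hmain]
    congr 1
    rw [← hfy]
    have h3 : x + y - (fpre v y + x) = y - fpre v y := by omega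
    rw [h3]
    simp only [List.append_assoc]
    rw [List.replicate_add, List.append_assoc]
    simp

/-- The key combinatorial fact. -/
lemma key_ineq (F : ℕ → ℕ) (hF0 : ∀ m, F m ≤ m)
    (hmono : ∀ m m', m ≤ m' → F m ≤ F m' ∧ F m' ≤ F m + (m' - m))
    (x y x' y' n : ℕ) (hn : 1 ≤ n) (h1 : x + y = 3 * n) (h2 : x' + y' = 3 * n)
    (e1 : F y = n ∨ F y + x = n) (e2 : F y' = 2 * n ∨ F y' + x' = 2 * n) :
    (n ≤ x ∨ n ≤ x') ∧ x ≤ 2 * n ∧ x' ≤ 2 * n := by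
  have h4 := hF0 y
  have h5 := hF0 y'
  rcases le_total y y' with h | h
  · have h3 := hmono y y' h
    rcases e1 with e1 | e1 <;> rcases e2 with e2 | e2 <;> omega
  · have h3 := hmono y' y h
    rcases e1 with e1 | e1 <;> rcases e2 with e2 | e2 <;> omega

lemma marker_inj {α : Type} {A M : α} (hAM : A ≠ M) :
    ∀ (i j : ℕ) (u u' : List α),
      List.replicate i A ++ M :: u = List.replicate j A ++ M :: u' → i = j ∧ u = u' := by
  intro i
  induction i with
  | zero =>
    intro j u u' h
    cases j with
    | zero => simpa using h
    | succ j =>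
      simp only [List.replicate_zero, List.nil_append, List.replicate_succ,
        List.cons_append, List.cons.injEq] at h
      exact absurd h.1.symm hAM
  | succ i ih =>
    intro j u u' h
    cases j with
    | zero =>
      simp only [List.replicate_zero, List.nil_append, List.replicate_succ,
        List.cons_append, List.cons.injEq] at h
      exact absurd h.1 hAM
    | succ j =>
      simp only [List.replicate_succ, List.cons_append, List.cons.injEq, true_and] at h
      obtain ⟨h1, h2⟩ := ih j u u' h
      exact ⟨by omega, h2⟩

def aForm (w : List Sym7) : Prop :=
  ∃ n, 1 ≤ n ∧ w = List.replicate n Sym7.a ++ Sym7.hash :: List.replicate (2 * n) Sym7.a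

def bForm (w : List Sym7) : Prop :=
  ∃ n, 1 ≤ n ∧ w = List.replicate (2 * n) Sym7.b ++ Sym7.hash :: List.replicate n Sym7.b

/-- Our linear language: `{aⁿ#a²ⁿ} ∪ {b²ⁿ#bⁿ}`. -/
def myL : Language Sym7 := { s | aForm s ∨ bForm s }

lemma myL_dissect_a {p q : ℕ}
    (h : (List.replicate p Sym7.a ++ Sym7.hash :: List.replicate q Sym7.a) ∈ myL) :
    q = 2 * p ∧ 1 ≤ p := by
  rcases h with ⟨n, hn, he⟩ | ⟨n, hn, he⟩
  · obtain ⟨h1, h2⟩ := marker_inj (by simp : Sym7.a ≠ Sym7.hash) p n _ _ he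
    have h3 := congrArg List.length h2
    simp only [List.length_replicate] at h3
    omega
  · exfalso
    have hb : Sym7.b ∈ List.replicate p Sym7.a ++ Sym7.hash :: List.replicate q Sym7.a := by
      rw [he]
      apply List.mem_append_left
      exact List.mem_replicate.mpr ⟨by omega, rfl⟩
    simp [List.mem_append, List.mem_replicate] at hb

lemma myL_dissect_b {p q : ℕ}
    (h : (List.replicate p Sym7.b ++ Sym7.hash :: List.replicate q Sym7.b) ∈ myL) :
    p = 2 * q ∧ 1 ≤ q := by
  rcases h with ⟨n, hn, he⟩ | ⟨n, hn, he⟩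
  · exfalso
    have hb : Sym7.a ∈ List.replicate p Sym7.b ++ Sym7.hash :: List.replicate q Sym7.b := by
      rw [he]
      apply List.mem_append_left
      exact List.mem_replicate.mpr ⟨by omega, rfl⟩
    simp [List.mem_append, List.mem_replicate] at hb
  · obtain ⟨h1, h2⟩ := marker_inj (by simp : Sym7.b ≠ Sym7.hash) p (2 * n) _ _ he
    have h3 := congrArg List.length h2
    simp only [List.length_replicate] at h3
    omega

/-- A word whose letters are all `A` or `M`, with exactly one `M`, is a one-marker word. -/
lemma shape_of_counts {A : Sym7} (hAM : A ≠ Sym7.hash) :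
    ∀ (w : List Sym7), (∀ z ∈ w, z = A ∨ z = Sym7.hash) → w.count Sym7.hash = 1 →
      ∃ x y, w = List.replicate x A ++ Sym7.hash :: List.replicate y A ∧ x + y + 1 = w.length := by
  intro w
  induction w with
  | nil => intro _ h; simp at h
  | cons z w ih =>
    intro hmem hcnt
    rcases hmem z (List.mem_cons_self) with rfl | rfl
    · have hcnt' : w.count Sym7.hash = 1 := by
        rw [List.count_cons] at hcnt
        simp [hAM] at hcnt
        omega
      obtain ⟨x, y, hw, hl⟩ := ih (fun z hz => hmem z (List.mem_cons_of_mem _ hz)) hcnt'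
      exact ⟨x + 1, y, by rw [hw]; simp [List.replicate_succ], by simp; omega⟩
    · have hcnt' : w.count Sym7.hash = 0 := by
        rw [List.count_cons] at hcnt
        simp at hcnt
        omega
      have hrep : w = List.replicate w.length A := by
        apply List.eq_replicate_length.mpr
        intro z hz
        rcases hmem z (List.mem_cons_of_mem _ hz) with rfl | rfl
        · rfl
        · exact absurd (List.count_eq_zero.mp hcnt' hz) (fun h => h)
      exact ⟨0, w.length, by rw [← hrep]; simp, by simp⟩

/-- The linear grammar for `myL`. -/
def myG : LinearGrammar Sym7 where
  NT := Fin 3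
  initial := 0
  rules :=
    [ (0, LinearRhs.nt [Sym7.a] 1 [Sym7.a, Sym7.a]),
      (0, LinearRhs.tm [Sym7.a, Sym7.hash, Sym7.a, Sym7.a]),
      (1, LinearRhs.nt [Sym7.a] 1 [Sym7.a, Sym7.a]),
      (1, LinearRhs.tm [Sym7.a, Sym7.hash, Sym7.a, Sym7.a]),
      (0, LinearRhs.nt [Sym7.b, Sym7.b] 2 [Sym7.b]),
      (0, LinearRhs.tm [Sym7.b, Sym7.b, Sym7.hash, Sym7.b]),
      (2, LinearRhs.nt [Sym7.b, Sym7.b] 2 [Sym7.b]),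
      (2, LinearRhs.tm [Sym7.b, Sym7.b, Sym7.hash, Sym7.b]) ]

lemma aForm_base : aForm [Sym7.a, Sym7.hash, Sym7.a, Sym7.a] := ⟨1, le_refl 1, rfl⟩

lemma bForm_base : bForm [Sym7.b, Sym7.b, Sym7.hash, Sym7.b] := ⟨1, le_refl 1, rfl⟩

lemma aForm_step {w : List Sym7} (h : aForm w) :
    aForm ([Sym7.a] ++ w ++ [Sym7.a, Sym7.a]) := by
  obtain ⟨n, hn, rfl⟩ := h
  refine ⟨n + 1, by omega, ?_⟩
  have h2 : 2 * (n + 1) = 2 * n + 2 := by ring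
  rw [h2, List.replicate_add (m := 2 * n) (n := 2),
    List.replicate_succ (n := n)]
  simp only [List.cons_append, List.nil_append, List.append_assoc, List.singleton_append]
  rfl

lemma bForm_step {w : List Sym7} (h : bForm w) :
    bForm ([Sym7.b, Sym7.b] ++ w ++ [Sym7.b]) := by
  obtain ⟨n, hn, rfl⟩ := h
  refine ⟨n + 1, by omega, ?_⟩
  have h2 : 2 * (n + 1) = 2 + 2 * n := by ring
  rw [h2, List.replicate_add (m := 2) (n := 2 * n),
    List.replicate_succ' (n := n)]
  simp only [List.cons_append, List.nil_append, List.append_assoc, List.singleton_append]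
  rfl

lemma myG_sound {X : Fin 3} {w : List Sym7} (h : myG.DerivesFrom X w) :
    (X = 1 → aForm w) ∧ (X = 2 → bForm w) ∧ (X = 0 → aForm w ∨ bForm w) := by
  refine LinearGrammar.DerivesFrom.rec (motive := fun (X : Fin 3) w _ => (X = 1 → aForm w) ∧ (X = 2 → bForm w) ∧ (X = 0 → aForm w ∨ bForm w)) ?_ ?_ h
  next =>
    intro A u hr
    unfold myG at hr
    simp only [myG, List.mem_cons, List.not_mem_nil, or_false, Prod.mk.injEq, Prod.ext_iff] at hr
    rcases hr with ⟨h1,h2⟩|⟨h1,h2⟩|⟨h1,h2⟩|⟨h1,h2⟩|⟨h1,h2⟩|⟨h1,h2⟩|⟨h1,h2⟩|⟨h1,h2⟩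
    · cases h2
    · injection h2 with h2; subst h1; subst h2
      exact ⟨fun h => absurd h (by decide), fun h => absurd h (by decide),
        fun _ => Or.inl aForm_base⟩
    · cases h2
    · injection h2 with h2; subst h1; subst h2
      exact ⟨fun _ => aForm_base, fun h => absurd h (by decide), fun h => absurd h (by decide)⟩
    · cases h2
    · injection h2 with h2; subst h1; subst h2
      exact ⟨fun h => absurd h (by decide), fun h => absurd h (by decide),
        fun _ => Or.inr bForm_base⟩
    · cases h2
    · injection h2 with h2; subst h1; subst h2
      exact ⟨fun h => absurd h (by decide), fun _ => bForm_base, fun h => absurd h (by decide)⟩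
  next =>
    intro A B u v w hr hd ih
    unfold myG at hr
    simp only [myG, List.mem_cons, List.not_mem_nil, or_false, Prod.mk.injEq, Prod.ext_iff] at hr
    rcases hr with ⟨h1,h2⟩|⟨h1,h2⟩|⟨h1,h2⟩|⟨h1,h2⟩|⟨h1,h2⟩|⟨h1,h2⟩|⟨h1,h2⟩|⟨h1,h2⟩
    · injection h2 with hu hB hv; subst h1; subst hu; subst hB; subst hv
      exact ⟨fun h => absurd h (by decide), fun h => absurd h (by decide),
        fun _ => Or.inl (aForm_step (ih.1 rfl))⟩
    · cases h2
    · injection h2 with hu hB hv; subst h1; subst hu; subst hB; subst hv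
      exact ⟨fun _ => aForm_step (ih.1 rfl), fun h => absurd h (by decide),
        fun h => absurd h (by decide)⟩
    · cases h2
    · injection h2 with hu hB hv; subst h1; subst hu; subst hB; subst hv
      exact ⟨fun h => absurd h (by decide), fun h => absurd h (by decide),
        fun _ => Or.inr (bForm_step (ih.2.1 rfl))⟩
    · cases h2
    · injection h2 with hu hB hv; subst h1; subst hu; subst hB; subst hv
      exact ⟨fun h => absurd h (by decide), fun _ => bForm_step (ih.2.1 rfl),
        fun h => absurd h (by decide)⟩
    · cases h2

lemma cons_marker_a (n : ℕ) :
    List.replicate (n + 1) Sym7.a ++ Sym7.hash :: List.replicate (2 * (n + 1)) Sym7.a =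
      [Sym7.a] ++ (List.replicate n Sym7.a ++ Sym7.hash :: List.replicate (2 * n) Sym7.a) ++
        [Sym7.a, Sym7.a] := by
  have h2 : 2 * (n + 1) = 2 * n + 2 := by ring
  rw [h2, List.replicate_add (m := 2 * n) (n := 2), List.replicate_succ (n := n)]
  simp only [List.cons_append, List.nil_append, List.append_assoc, List.singleton_append]
  rfl

lemma cons_marker_b (n : ℕ) :
    List.replicate (2 * (n + 1)) Sym7.b ++ Sym7.hash :: List.replicate (n + 1) Sym7.b =
      [Sym7.b, Sym7.b] ++ (List.replicate (2 * n) Sym7.b ++ Sym7.hash :: List.replicate n Sym7.b) ++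
        [Sym7.b] := by
  have h2 : 2 * (n + 1) = 2 + 2 * n := by ring
  rw [h2, List.replicate_add (m := 2) (n := 2 * n), List.replicate_succ' (n := n)]
  simp only [List.cons_append, List.nil_append, List.append_assoc, List.singleton_append]
  rfl

lemma mem_rule_0a : ((0 : Fin 3), LinearRhs.nt [Sym7.a] (1 : Fin 3) [Sym7.a, Sym7.a]) ∈ myG.rules :=
  List.mem_cons_self

lemma mem_rule_0a' : ((0 : Fin 3), LinearRhs.tm [Sym7.a, Sym7.hash, Sym7.a, Sym7.a]) ∈ myG.rules :=
  List.mem_cons_of_mem _ (List.mem_cons_self)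

lemma mem_rule_1a : ((1 : Fin 3), LinearRhs.nt [Sym7.a] (1 : Fin 3) [Sym7.a, Sym7.a]) ∈ myG.rules :=
  List.mem_cons_of_mem _ (List.mem_cons_of_mem _ (List.mem_cons_self))

lemma mem_rule_1a' : ((1 : Fin 3), LinearRhs.tm [Sym7.a, Sym7.hash, Sym7.a, Sym7.a]) ∈ myG.rules :=
  List.mem_cons_of_mem _ (List.mem_cons_of_mem _ (List.mem_cons_of_mem _ (List.mem_cons_self)))

lemma mem_rule_0b : ((0 : Fin 3), LinearRhs.nt [Sym7.b, Sym7.b] (2 : Fin 3) [Sym7.b]) ∈ myG.rules :=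
  List.mem_cons_of_mem _ (List.mem_cons_of_mem _ (List.mem_cons_of_mem _
    (List.mem_cons_of_mem _ (List.mem_cons_self))))

lemma mem_rule_0b' : ((0 : Fin 3), LinearRhs.tm [Sym7.b, Sym7.b, Sym7.hash, Sym7.b]) ∈ myG.rules :=
  List.mem_cons_of_mem _ (List.mem_cons_of_mem _ (List.mem_cons_of_mem _
    (List.mem_cons_of_mem _ (List.mem_cons_of_mem _ (List.mem_cons_self)))))

lemma mem_rule_2b : ((2 : Fin 3), LinearRhs.nt [Sym7.b, Sym7.b] (2 : Fin 3) [Sym7.b]) ∈ myG.rules :=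
  List.mem_cons_of_mem _ (List.mem_cons_of_mem _ (List.mem_cons_of_mem _
    (List.mem_cons_of_mem _ (List.mem_cons_of_mem _ (List.mem_cons_of_mem _
      (List.mem_cons_self))))))

lemma mem_rule_2b' : ((2 : Fin 3), LinearRhs.tm [Sym7.b, Sym7.b, Sym7.hash, Sym7.b]) ∈ myG.rules :=
  List.mem_cons_of_mem _ (List.mem_cons_of_mem _ (List.mem_cons_of_mem _
    (List.mem_cons_of_mem _ (List.mem_cons_of_mem _ (List.mem_cons_of_mem _
      (List.mem_cons_of_mem _ (List.mem_cons_self)))))))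

lemma myG_derives_a1 : ∀ n : ℕ,
    myG.DerivesFrom (1 : Fin 3)
      (List.replicate (n + 1) Sym7.a ++ Sym7.hash :: List.replicate (2 * (n + 1)) Sym7.a) := by
  intro n
  induction n with
  | zero => exact LinearGrammar.DerivesFrom.tm mem_rule_1a'
  | succ n ih =>
    rw [cons_marker_a (n + 1)]
    exact LinearGrammar.DerivesFrom.nt mem_rule_1a ih

lemma myG_derives_b2 : ∀ n : ℕ,
    myG.DerivesFrom (2 : Fin 3)
      (List.replicate (2 * (n + 1)) Sym7.b ++ Sym7.hash :: List.replicate (n + 1) Sym7.b) := by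
  intro n
  induction n with
  | zero => exact LinearGrammar.DerivesFrom.tm mem_rule_2b'
  | succ n ih =>
    rw [cons_marker_b (n + 1)]
    exact LinearGrammar.DerivesFrom.nt mem_rule_2b ih

lemma myL_isLinear : myL.IsLinear := by
  refine ⟨myG, ?_⟩
  ext w
  constructor
  · intro h
    exact (myG_sound h).2.2 rfl
  · intro h
    rcases h with ⟨n, hn, rfl⟩ | ⟨n, hn, rfl⟩
    · obtain ⟨m, rfl⟩ : ∃ m, n = m + 1 := ⟨n - 1, by omega⟩
      cases m with
      | zero => exact LinearGrammar.DerivesFrom.tm mem_rule_0a'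
      | succ m =>
        rw [cons_marker_a (m + 1)]
        exact LinearGrammar.DerivesFrom.nt mem_rule_0a (myG_derives_a1 m)
    · obtain ⟨m, rfl⟩ : ∃ m, n = m + 1 := ⟨n - 1, by omega⟩
      cases m with
      | zero => exact LinearGrammar.DerivesFrom.tm mem_rule_0b'
      | succ m =>
        rw [cons_marker_b (m + 1)]
        exact LinearGrammar.DerivesFrom.nt mem_rule_0b (myG_derives_b2 m)

section DFAPump

variable {σ : Type} [Fintype σ]

lemma evalFrom_replicate (M : DFA Sym7 σ) (ch : Sym7) :
    ∀ (t : ℕ) (s : σ), M.evalFrom s (List.replicate t ch) = (fun q => M.step q ch)^[t] s := by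
  intro t
  induction t with
  | zero => intro s; rfl
  | succ t ih =>
    intro s
    rw [List.replicate_succ]
    have h1 : M.evalFrom s (ch :: List.replicate t ch) =
        M.evalFrom (M.step s ch) (List.replicate t ch) := rfl
    rw [h1, ih, Function.iterate_succ_apply]

lemma exists_period (f : σ → σ) : ∃ c P, 0 < P ∧ ∀ t, c ≤ t → f^[t] = f^[t + P] := by
  have hni : ¬ Function.Injective (fun t : ℕ => f^[t]) := by
    intro hinj
    exact Set.infinite_range_of_injective hinj (Set.toFinite _)
  rw [Function.not_injective_iff] at hni
  obtain ⟨i, j, heq, hne⟩ := hni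
  rcases lt_or_gt_of_ne hne with hlt | hlt
  · refine ⟨i, j - i, by omega, ?_⟩
    intro t ht
    obtain ⟨r, rfl⟩ : ∃ r, t = r + i := ⟨t - i, by omega⟩
    calc f^[r + i] = f^[r] ∘ f^[i] := Function.iterate_add f r i
      _ = f^[r] ∘ f^[j] := by rw [heq]
      _ = f^[r + j] := (Function.iterate_add f r j).symm
      _ = f^[(r + i) + (j - i)] := by rw [show (r + i) + (j - i) = r + j by omega]
  · refine ⟨j, i - j, by omega, ?_⟩
    intro t ht
    obtain ⟨r, rfl⟩ : ∃ r, t = r + j := ⟨t - j, by omega⟩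
    calc f^[r + j] = f^[r] ∘ f^[j] := Function.iterate_add f r j
      _ = f^[r] ∘ f^[i] := by rw [heq]
      _ = f^[r + i] := (Function.iterate_add f r i).symm
      _ = f^[(r + j) + (i - j)] := by rw [show (r + j) + (i - j) = r + i by omega]

lemma period_mul (f : σ → σ) (c P : ℕ) (h : ∀ t, c ≤ t → f^[t] = f^[t + P]) :
    ∀ (k t : ℕ), c ≤ t → f^[t] = f^[t + k * P] := by
  intro k
  induction k with
  | zero => intro t ht; simp
  | succ k ih =>
    intro t ht
    have h1 := ih t ht
    have h2 := h (t + k * P) (by omega)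
    rw [h1, h2]
    congr 1
    ring

lemma exists_uniform_period (M : DFA Sym7 σ) : ∃ c P, 0 < P ∧
    (∀ t, c ≤ t → (fun q => M.step q Sym7.a)^[t] = (fun q => M.step q Sym7.a)^[t + P]) ∧
    (∀ t, c ≤ t → (fun q => M.step q Sym7.b)^[t] = (fun q => M.step q Sym7.b)^[t + P]) := by
  obtain ⟨c1, P1, hP1, h1⟩ := exists_period (fun q => M.step q Sym7.a)
  obtain ⟨c2, P2, hP2, h2⟩ := exists_period (fun q => M.step q Sym7.b)
  refine ⟨max c1 c2, P1 * P2, by positivity, ?_, ?_⟩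
  · intro t ht
    have := period_mul _ c1 P1 h1 P2 t (le_trans (le_max_left _ _) ht)
    rwa [show P2 * P1 = P1 * P2 by ring] at this
  · intro t ht
    exact period_mul _ c2 P2 h2 P1 t (le_trans (le_max_right _ _) ht)

lemma word_mem_iff (M : DFA Sym7 σ) (L₁ : Language Sym7) (hM : M.accepts = L₁)
    (ch : Sym7) (x y : ℕ) :
    (List.replicate x ch ++ Sym7.hash :: List.replicate y ch) ∈ L₁ ↔
      (fun q => M.step q ch)^[y]
        (M.step ((fun q => M.step q ch)^[x] M.start) Sym7.hash) ∈ M.accept := by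
  rw [← hM]
  have h0 : (List.replicate x ch ++ Sym7.hash :: List.replicate y ch) ∈ M.accepts ↔
      M.evalFrom M.start (List.replicate x ch ++ Sym7.hash :: List.replicate y ch) ∈
        M.accept := Iff.rfl
  rw [h0, DFA.evalFrom_of_append]
  have h1 : M.evalFrom (M.evalFrom M.start (List.replicate x ch))
        (Sym7.hash :: List.replicate y ch) =
      M.evalFrom (M.step (M.evalFrom M.start (List.replicate x ch)) Sym7.hash)
        (List.replicate y ch) := rfl
  rw [h1, evalFrom_replicate, evalFrom_replicate]

/-- Marker-word pumping: the `x`-side can be changed by multiples of `P`. -/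
lemma pump_x (M : DFA Sym7 σ) (L₁ : Language Sym7) (hM : M.accepts = L₁)
    (ch : Sym7) (c P : ℕ)
    (hper : ∀ t, c ≤ t → (fun q => M.step q ch)^[t] = (fun q => M.step q ch)^[t + P])
    (x y k : ℕ) (hx : c ≤ x) :
    ((List.replicate (x + k * P) ch ++ Sym7.hash :: List.replicate y ch) ∈ L₁ ↔
      (List.replicate x ch ++ Sym7.hash :: List.replicate y ch) ∈ L₁) := by
  rw [word_mem_iff M L₁ hM, word_mem_iff M L₁ hM]
  rw [← period_mul _ c P hper k x hx]

lemma pump_y (M : DFA Sym7 σ) (L₁ : Language Sym7) (hM : M.accepts = L₁)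
    (ch : Sym7) (c P : ℕ)
    (hper : ∀ t, c ≤ t → (fun q => M.step q ch)^[t] = (fun q => M.step q ch)^[t + P])
    (x y k : ℕ) (hy : c ≤ y) :
    ((List.replicate x ch ++ Sym7.hash :: List.replicate (y + k * P) ch) ∈ L₁ ↔
      (List.replicate x ch ++ Sym7.hash :: List.replicate y ch) ∈ L₁) := by
  rw [word_mem_iff M L₁ hM, word_mem_iff M L₁ hM]
  rw [← period_mul _ c P hper k y hy]

end DFAPump

lemma count_replicate_ne {A z : Sym7} (h : z ≠ A) (x : ℕ) : (List.replicate x A).count z = 0 :=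
  List.count_eq_zero.mpr (fun hmem => h (List.eq_of_mem_replicate hmem))

lemma count_hash_marker {A : Sym7} (hA : Sym7.hash ≠ A) (x y : ℕ) :
    (List.replicate x A ++ Sym7.hash :: List.replicate y A).count Sym7.hash = 1 := by
  rw [List.count_append, count_replicate_ne hA, List.count_cons_self, count_replicate_ne hA]

lemma count_marker_zero {A z : Sym7} (h1 : z ≠ A) (h2 : z ≠ Sym7.hash) (x y : ℕ) :
    (List.replicate x A ++ Sym7.hash :: List.replicate y A).count z = 0 := by
  rw [List.count_append, count_replicate_ne h1, List.count_cons_of_ne (Ne.symm h2),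
    count_replicate_ne h1]

lemma marker_length {α : Type} (A M : α) (x y : ℕ) :
    (List.replicate x A ++ M :: List.replicate y A).length = x + y + 1 := by
  simp
  omega

theorem myL_not_FLang :
    ¬ ∃ (L₁ : Language Sym7) (L₂ : Language FDir),
        L₁.IsRegular ∧ L₂.IsRegular ∧ FLang L₁ L₂ = myL := by
  rintro ⟨L₁, L₂, ⟨σ, instσ, M, hM⟩, _hreg₂, hF⟩
  obtain ⟨c, P, hP, hpera, hperb⟩ := exists_uniform_period M
  -- membership of the two families in the F-language
  have hsawL : ∀ m : ℕ, 1 ≤ m →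
      (List.replicate m Sym7.a ++ Sym7.hash :: List.replicate (2*m) Sym7.a) ∈ FLang L₁ L₂ := by
    intro m hm; rw [hF]; exact Or.inl ⟨m, hm, rfl⟩
  have hsbwL : ∀ m : ℕ, 1 ≤ m →
      (List.replicate (2*m) Sym7.b ++ Sym7.hash :: List.replicate m Sym7.b) ∈ FLang L₁ L₂ := by
    intro m hm; rw [hF]; exact Or.inr ⟨m, hm, rfl⟩
  -- witness extraction
  have hwitness : ∀ (A : Sym7), A ≠ Sym7.hash → ∀ (s : List Sym7) (m : ℕ),
      s ∈ FLang L₁ L₂ → s.length = 3*m+1 → s.count Sym7.hash = 1 →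
      (∀ z ∈ s, z = A ∨ z = Sym7.hash) →
      (∃ x y, x + y = 3*m ∧
        (List.replicate x A ++ Sym7.hash :: List.replicate y A) ∈ L₁) ∧
      (∃ v ∈ L₂, v.length = 3*m+1) := by
    intro A hA s m hs hslen hscnt hsmem
    obtain ⟨w, hw1, v, hv1, hlen, hfold⟩ := hs
    have hwlen : w.length = 3*m+1 := by
      rw [← (foldWord_length hfold), hslen]
    have hcnt : ∀ z, w.count z = s.count z := fun z => (foldWord_count hfold z).symm
    have hwmem : ∀ z ∈ w, z = A ∨ z = Sym7.hash := by
      intro z hzw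
      have h1 : 0 < w.count z := List.count_pos_iff.mpr hzw
      rw [hcnt] at h1
      exact hsmem z (List.count_pos_iff.mp h1)
    have hwcnt : w.count Sym7.hash = 1 := by rw [hcnt]; exact hscnt
    obtain ⟨x, y, hwform, hxy⟩ := shape_of_counts hA w hwmem hwcnt
    refine ⟨⟨x, y, by omega, by rw [← hwform]; exact hw1⟩, ⟨v, hv1, by omega⟩⟩
  have hAex : ∀ m : ℕ, 1 ≤ m →
      (∃ x y, x + y = 3*m ∧
        (List.replicate x Sym7.a ++ Sym7.hash :: List.replicate y Sym7.a) ∈ L₁) ∧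
      (∃ v ∈ L₂, v.length = 3*m+1) := by
    intro m hm
    refine hwitness Sym7.a (by simp) _ m (hsawL m hm) (by rw [marker_length]; omega)
      (count_hash_marker (by simp) _ _) ?_
    intro z hz
    rcases List.mem_append.mp hz with h | h
    · exact Or.inl (List.eq_of_mem_replicate h)
    · rcases List.mem_cons.mp h with h | h
      · exact Or.inr h
      · exact Or.inl (List.eq_of_mem_replicate h)
  have hBex : ∀ m : ℕ, 1 ≤ m →
      (∃ x y, x + y = 3*m ∧
        (List.replicate x Sym7.b ++ Sym7.hash :: List.replicate y Sym7.b) ∈ L₁) ∧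
      (∃ v ∈ L₂, v.length = 3*m+1) := by
    intro m hm
    refine hwitness Sym7.b (by simp) _ m (hsbwL m hm) (by rw [marker_length]; omega)
      (count_hash_marker (by simp) _ _) ?_
    intro z hz
    rcases List.mem_append.mp hz with h | h
    · exact Or.inl (List.eq_of_mem_replicate h)
    · rcases List.mem_cons.mp h with h | h
      · exact Or.inr h
      · exact Or.inl (List.eq_of_mem_replicate h)
  -- the key inequality at each level
  have hKey : ∀ m x y x' y', 1 ≤ m → x + y = 3*m → x' + y' = 3*m →
      (List.replicate x Sym7.a ++ Sym7.hash :: List.replicate y Sym7.a) ∈ L₁ →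
      (List.replicate x' Sym7.b ++ Sym7.hash :: List.replicate y' Sym7.b) ∈ L₁ →
      (m ≤ x ∨ m ≤ x') ∧ x ≤ 2*m ∧ x' ≤ 2*m := by
    intro m x y x' y' hm hxy hxy' hwa hwb
    obtain ⟨v, hv, hvlen⟩ := (hAex m hm).2
    -- fold the a-word
    obtain ⟨pos, hfold, hpos⟩ := foldWord_marker Sym7.a Sym7.hash x y v (by omega)
    have hinL : (List.replicate pos Sym7.a ++ Sym7.hash ::
        List.replicate (x + y - pos) Sym7.a) ∈ myL := by
      rw [← hF]
      exact ⟨_, hwa, v, hv, by rw [marker_length]; omega, hfold⟩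
    have hposle : pos ≤ x + y := by
      have := fpre_le v y
      rcases hpos with h | h <;> omega
    obtain ⟨hq, hp⟩ := myL_dissect_a hinL
    have hpos_eq : pos = m := by omega
    -- fold the b-word
    obtain ⟨pos', hfold', hpos'⟩ := foldWord_marker Sym7.b Sym7.hash x' y' v (by omega)
    have hinL' : (List.replicate pos' Sym7.b ++ Sym7.hash ::
        List.replicate (x' + y' - pos') Sym7.b) ∈ myL := by
      rw [← hF]
      exact ⟨_, hwb, v, hv, by rw [marker_length]; omega, hfold'⟩
    have hposle' : pos' ≤ x' + y' := by
      have := fpre_le v y'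
      rcases hpos' with h | h <;> omega
    obtain ⟨hq', hp'⟩ := myL_dissect_b hinL'
    have hpos_eq' : pos' = 2*m := by omega
    -- apply the arithmetic key lemma
    refine key_ineq (fpre v) (fpre_le v) (fun m m' h => fpre_mono v h) x y x' y' m hm hxy hxy'
      ?_ ?_
    · rcases hpos with h | h
      · exact Or.inl (by omega)
      · exact Or.inr (by omega)
    · rcases hpos' with h | h
      · exact Or.inl (by omega)
      · exact Or.inr (by omega)
  -- marker-moving via pumping
  have hMove : ∀ (ch : Sym7)
      (hper : ∀ t, c ≤ t → (fun q => M.step q ch)^[t] = (fun q => M.step q ch)^[t + P]),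
      ∀ x y, (List.replicate x ch ++ Sym7.hash :: List.replicate y ch) ∈ L₁ →
      c ≤ x → c ≤ y →
      ∃ x₁ y₁, x₁ + y₁ = x + y ∧ x₁ < c + P ∧
        (List.replicate x₁ ch ++ Sym7.hash :: List.replicate y₁ ch) ∈ L₁ := by
    intro ch hper x
    induction x using Nat.strong_induction_on with
    | _ x ih =>
      intro y hw hx hy
      by_cases hcase : x < c + P
      · exact ⟨x, y, rfl, hcase, hw⟩
      · have hx' : c ≤ x - P := by omega
        have hdown : (List.replicate (x - P) ch ++ Sym7.hash :: List.replicate y ch) ∈ L₁ := by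
          have hiff := pump_x M L₁ hM ch c P hper (x - P) y 1 hx'
          rw [one_mul, show x - P + P = x by omega] at hiff
          exact hiff.mp hw
        have hup : (List.replicate (x - P) ch ++ Sym7.hash ::
            List.replicate (y + P) ch) ∈ L₁ := by
          have hiff := pump_y M L₁ hM ch c P hper (x - P) y 1 hy
          rw [one_mul] at hiff
          exact hiff.mpr hdown
        obtain ⟨x₁, y₁, hsum, hlt, hmem⟩ := ih (x - P) (by omega) (y + P) hup hx' (by omega)
        exact ⟨x₁, y₁, by omega, hlt, hmem⟩
  -- the final contradiction at level n := c + P + 1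
  set n := c + P + 1 with hn
  have hn1 : 1 ≤ n := by omega
  obtain ⟨⟨x, y, hxy, hwa⟩, -⟩ := hAex n hn1
  obtain ⟨⟨x', y', hxy', hwb⟩, -⟩ := hBex n hn1
  obtain ⟨hor, hx2, hx2'⟩ := hKey n x y x' y' hn1 hxy hxy' hwa hwb
  have hmain : n ≤ x → False := by
    intro hnx
    obtain ⟨x₁, y₁, hsum₁, hlt₁, hwa'⟩ := hMove Sym7.a hpera x y hwa (by omega) (by omega)
    have hxy₁ : x₁ + y₁ = 3*n := by omega
    obtain ⟨hor2, -, hx2''⟩ := hKey n x₁ y₁ x' y' hn1 hxy₁ hxy' hwa' hwb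
    have hnx' : n ≤ x' := by omega
    obtain ⟨x₁', y₁', hsum₂, hlt₂, hwb'⟩ := hMove Sym7.b hperb x' y' hwb (by omega) (by omega)
    have hxy₁' : x₁' + y₁' = 3*n := by omega
    obtain ⟨hor3, -, -⟩ := hKey n x₁ y₁ x₁' y₁' hn1 hxy₁ hxy₁' hwa' hwb'
    omega
  rcases hor with h | h
  · exact hmain h
  · obtain ⟨x₁', y₁', hsum₂, hlt₂, hwb'⟩ := hMove Sym7.b hperb x' y' hwb (by omega) (by omega)
    have hxy₁' : x₁' + y₁' = 3*n := by omega
    obtain ⟨hor2, -, -⟩ := hKey n x y x₁' y₁' hn1 hxy hxy₁' hwa hwb'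
    exact hmain (by omega)

end FoldProof

/-- Theorem 2: the class of languages generated by F-systems with regular core and
regular folding procedure languages is not equal to the class of linear context-free
languages: there exists a linear context-free language that is not of the form
`{ h(w, v) : w ∈ L₁, v ∈ L₂, |w| = |v| }` for any regular languages `L₁`, `L₂`. -/
theorem fsystem_reg_reg_ne_linear :
    ∃ L : Language Sym7, L.IsLinear ∧
      ¬ ∃ (L₁ : Language Sym7) (L₂ : Language FDir),
          L₁.IsRegular ∧ L₂.IsRegular ∧ FLang L₁ L₂ = L :=
  ⟨FoldProof.myL, FoldProof.myL_isLinear, FoldProof.myL_not_FLang⟩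
end

section
/- Claim in the proof of Theorem 2: Let L = { aⁿ#(bc)ⁿ : n ≥ 1 } ∪ { (de)ⁿ#fⁿ : n ≥ 1 } over Σ = {a, b, c, d, e, f, #}, and suppose L = { h(w, v) : w ∈ L₁, v ∈ L₂, |w| = |v| } for regular languages L₁ ⊆ Σ*, L₂ ⊆ Γ* recognized by finite automata with N₁ and N₂ states respectively, where every word of L₁ and of L₂ has length 3i+1 for some i ≥ 1. Let N = N₁N₂. Then every word w ∈ L₁ contains exactly one occurrence of the symbol #, and this occurrence lies among the first N symbols of w. -/

lemma foldRev_total {α : Type} : ∀ (w : List α) (v : List FDir), w.length = v.length →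
    ∃ s, foldRev w v = some s
  | [], [], _ => ⟨[], rfl⟩
  | a :: w, b :: v, h => by
      obtain ⟨t, ht⟩ := foldRev_total w v (by simpa using h)
      cases b
      · exact ⟨a :: t, by simp [foldRev, ht]⟩
      · exact ⟨t ++ [a], by simp [foldRev, ht]⟩
  | [], _ :: _, h => by simp at h
  | _ :: _, [], h => by simp at h

lemma foldRev_length {α : Type} : ∀ (w : List α) (v : List FDir) {s : List α},
    foldRev w v = some s → s.length = w.length
  | [], [], s, h => by simp [foldRev] at h; simp [← h]
  | a :: w, b :: v, s, h => by
      simp only [foldRev, Option.map_eq_some_iff] at h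
      obtain ⟨t, ht, rfl⟩ := h
      have := foldRev_length w v ht
      cases b <;> simp [this]
  | [], _ :: _, s, h => by simp [foldRev] at h
  | _ :: _, [], s, h => by simp [foldRev] at h

lemma foldRev_count {α : Type} [DecidableEq α] (x : α) :
    ∀ (w : List α) (v : List FDir) {s : List α},
    foldRev w v = some s → s.count x = w.count x
  | [], [], s, h => by simp [foldRev] at h; simp [← h]
  | a :: w, b :: v, s, h => by
      simp only [foldRev, Option.map_eq_some_iff] at h
      obtain ⟨t, ht, rfl⟩ := h
      have := foldRev_count x w v ht
      cases b  <;> simp [List.count_cons, List.count_append, this]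
  | [], _ :: _, s, h => by simp [foldRev] at h
  | _ :: _, [], s, h => by simp [foldRev] at h

lemma foldRev_wrap {α : Type} : ∀ (w₁ : List α) (v₁ : List FDir), w₁.length = v₁.length →
    ∃ A B : List α, ∀ w₂ v₂,
      foldRev (w₁ ++ w₂) (v₁ ++ v₂) = (foldRev w₂ v₂).map (fun t => A ++ t ++ B)
  | [], [], _ => ⟨[], [], fun w₂ v₂ => by cases h : foldRev w₂ v₂ <;> simp [h]⟩
  | a :: w, b :: v, h => by
      obtain ⟨A, B, hAB⟩ := foldRev_wrap w v (by simpa using h)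
      cases b with
      | up =>
          refine ⟨a :: A, B, fun w₂ v₂ => ?_⟩
          have := hAB w₂ v₂
          cases h2 : foldRev w₂ v₂ <;>
            simp_all [foldRev, List.cons_append]
      | down =>
          refine ⟨A, B ++ [a], fun w₂ v₂ => ?_⟩
          have := hAB w₂ v₂
          cases h2 : foldRev w₂ v₂ <;>
            simp_all [foldRev, List.cons_append, List.append_assoc]
  | [], _ :: _, h => by simp at h
  | _ :: _, [], h => by simp at h

lemma dfa_pump {α σ : Type*} (M : DFA α σ) (w : List α) (k l : ℕ) (_ : k ≤ l)
    (h : M.eval (w.take k) = M.eval (w.take l)) (m : ℕ) :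
    M.eval (w.take k ++ (List.replicate m ((w.drop k).take (l - k))).flatten ++ w.drop l)
      = M.eval w := by
  set y := (w.drop k).take (l - k) with hy
  have htl : w.take l = w.take k ++ y := by
    rw [hy, ← List.take_add]
    congr 1
    omega
  have hq : M.evalFrom (M.eval (w.take k)) y = M.eval (w.take k) := by
    conv_rhs => rw [h, htl]
    simp [DFA.eval, DFA.evalFrom_of_append]
  have hY : ∀ n, M.evalFrom (M.eval (w.take k)) (List.replicate n y).flatten
      = M.eval (w.take k) := by
    intro n
    induction n with
    | zero => simp
    | succ n ih => rw [List.replicate_succ, List.flatten_cons, DFA.evalFrom_of_append, hq, ih]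
  calc M.eval (w.take k ++ (List.replicate m y).flatten ++ w.drop l)
      = M.evalFrom (M.eval (w.take k)) ((List.replicate m y).flatten ++ w.drop l) := by
        simp [DFA.eval, DFA.evalFrom_of_append, List.append_assoc]
    _ = M.evalFrom (M.eval (w.take l)) (w.drop l) := by
        rw [DFA.evalFrom_of_append, hY, h]
    _ = M.eval w := by
        simp only [DFA.eval]
        rw [← DFA.evalFrom_of_append, List.take_append_drop]

lemma Lpaper_count {s : List Sym7} (hs : s ∈ Lpaper) : s.count Sym7.hash = 1 := by
  rcases hs with ⟨n, -, rfl⟩ | ⟨n, -, rfl⟩ <;>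
    simp [List.count_append, List.count_flatten, List.count_replicate, List.map_replicate,
      List.sum_replicate, List.count_cons]

/-- Claim in the proof of Theorem 2: suppose `L = { aⁿ#(bc)ⁿ : n ≥ 1 } ∪ { (de)ⁿ#fⁿ : n ≥ 1 }`
is generated by the F-system `(L₁, L₂)` where `L₁`, `L₂` are recognized by finite
automata with `N₁` and `N₂` states respectively, and every word of `L₁` and of `L₂`
has length `3i + 1` for some `i ≥ 1`.  Let `N = N₁N₂`.  Then every word `w ∈ L₁`
contains exactly one occurrence of `#`, and this occurrence lies among the first `N`
symbols of `w`. -/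
theorem claim_hash_position {σ₁ σ₂ : Type} [Fintype σ₁] [Fintype σ₂]
    (M₁ : DFA Sym7 σ₁) (M₂ : DFA FDir σ₂)
    (hlen₁ : ∀ w ∈ M₁.accepts, ∃ i : ℕ, 1 ≤ i ∧ w.length = 3 * i + 1)
    (hlen₂ : ∀ v ∈ M₂.accepts, ∃ i : ℕ, 1 ≤ i ∧ v.length = 3 * i + 1)
    (hL : FLang M₁.accepts M₂.accepts = Lpaper) :
    ∀ w ∈ M₁.accepts, w.count Sym7.hash = 1 ∧
      Sym7.hash ∈ w.take (Fintype.card σ₁ * Fintype.card σ₂) := by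
  -- L₂ contains a word of every length 3n+1, n ≥ 1
  have hvex : ∀ n : ℕ, 1 ≤ n → ∃ v ∈ M₂.accepts, v.length = 3 * n + 1 := by
    intro n hn
    have hmem : (List.replicate n Sym7.a ++ [Sym7.hash] ++
        (List.replicate n [Sym7.b, Sym7.c]).flatten) ∈ FLang M₁.accepts M₂.accepts := by
      rw [hL]; exact Or.inl ⟨n, hn, rfl⟩
    obtain ⟨w₀, hw₀, v₀, hv₀, hlen, hfold⟩ := hmem
    refine ⟨v₀, hv₀, ?_⟩
    have h1 := foldRev_length _ _ hfold
    simp [List.map_replicate, List.sum_replicate] at h1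
    omega
  intro w hw
  obtain ⟨i, hi1, hiw⟩ := hlen₁ w hw
  obtain ⟨v, hv, hvl⟩ := hvex i hi1
  have hlwv : w.length = v.length := by omega
  obtain ⟨s, hs⟩ := foldRev_total w.reverse v.reverse (by simp [hlwv])
  have hsL : s ∈ Lpaper := hL ▸ (⟨w, hw, v, hv, hlwv, hs⟩ :
    s ∈ FLang M₁.accepts M₂.accepts)
  have hcnt : w.count Sym7.hash = 1 := by
    have h2 := foldRev_count Sym7.hash _ _ hs
    rw [List.count_reverse] at h2
    rw [← h2]; exact Lpaper_count hsL
  refine ⟨hcnt, ?_⟩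
  by_contra hmem
  set N := Fintype.card σ₁ * Fintype.card σ₂ with hN
  have hNw : N < w.length := by
    by_contra hle
    push_neg at hle
    rw [List.take_of_length_le hle] at hmem
    exact hmem (List.count_pos_iff.mp (by rw [hcnt]; norm_num))
  -- pigeonhole on state pairs along the first N+1 prefixes
  have hcard : Fintype.card (σ₁ × σ₂) < Fintype.card (Fin (N + 1)) := by
    simp [Fintype.card_prod, hN]
  obtain ⟨i₀, j₀, hne, heq⟩ := Fintype.exists_ne_map_eq_of_card_lt
    (fun i : Fin (N + 1) => (M₁.eval (w.take i), M₂.eval (v.take i))) hcard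
  obtain ⟨k, l, hkl, hlN, he1, he2⟩ : ∃ k l : ℕ, k < l ∧ l ≤ N ∧
      M₁.eval (w.take k) = M₁.eval (w.take l) ∧ M₂.eval (v.take k) = M₂.eval (v.take l) := by
    rcases hne.lt_or_gt with h | h
    · exact ⟨i₀, j₀, h, Nat.lt_succ_iff.mp j₀.isLt,
        congrArg Prod.fst heq, congrArg Prod.snd heq⟩
    · exact ⟨j₀, i₀, h, Nat.lt_succ_iff.mp i₀.isLt,
        (congrArg Prod.fst heq).symm, (congrArg Prod.snd heq).symm⟩
  obtain ⟨A, B, hAB⟩ := foldRev_wrap (w.drop l).reverse (v.drop l).reverse (by simp [hlwv])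
  set m := 3 * (A.length + B.length) + 4 with hm
  set y := (w.drop k).take (l - k) with hy
  set y' := (v.drop k).take (l - k) with hy'
  set Y := (List.replicate m y).flatten with hYdef
  set Y' := (List.replicate m y').flatten with hY'def
  set wm := w.take k ++ Y ++ w.drop l with hwm
  set vm := v.take k ++ Y' ++ v.drop l with hvm
  have hwmacc : wm ∈ M₁.accepts := by
    rw [DFA.mem_accepts] at hw ⊢
    rw [hwm, hYdef, hy, dfa_pump M₁ w k l hkl.le he1 m]; exact hw
  have hvmacc : vm ∈ M₂.accepts := by
    rw [DFA.mem_accepts] at hv ⊢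
    rw [hvm, hY'def, hy', dfa_pump M₂ v k l hkl.le he2 m]; exact hv
  have hylen : y.length = l - k := by
    rw [hy]; simp; omega
  have hy'len : y'.length = l - k := by
    rw [hy']; simp; omega
  have hYlen : Y.length = m * (l - k) := by
    simp [hYdef, List.map_replicate, List.sum_replicate, hylen]
  have hY'len : Y'.length = m * (l - k) := by
    simp [hY'def, List.map_replicate, List.sum_replicate, hy'len]
  have hwmlen : wm.length = k + m * (l - k) + (w.length - l) := by
    simp [hwm, hYlen]; omega
  have hvmlen : vm.length = k + m * (l - k) + (w.length - l) := by
    simp [hvm, hY'len, ← hlwv]; omega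
  obtain ⟨t, ht⟩ := foldRev_total (Y.reverse ++ (w.take k).reverse)
    (Y'.reverse ++ (v.take k).reverse) (by simp [hYlen, hY'len]; omega)
  have hfold : foldWord wm vm = some (A ++ t ++ B) := by
    show foldRev wm.reverse vm.reverse = _
    have hr1 : wm.reverse = (w.drop l).reverse ++ (Y.reverse ++ (w.take k).reverse) := by
      simp [hwm, List.reverse_append, List.append_assoc]
    have hr2 : vm.reverse = (v.drop l).reverse ++ (Y'.reverse ++ (v.take k).reverse) := by
      simp [hvm, List.reverse_append, List.append_assoc]
    rw [hr1, hr2, hAB, ht]; rfl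
  have hsm : (A ++ t ++ B) ∈ Lpaper := hL ▸ (⟨wm, hwmacc, vm, hvmacc, by omega, hfold⟩ :
    (A ++ t ++ B) ∈ FLang M₁.accepts M₂.accepts)
  -- the pumped middle contains no #
  have hxsub : w.take k ⊆ w.take N := by
    have hkk : w.take k = (w.take N).take k := by
      rw [List.take_take]; congr 1; omega
    rw [hkk]; exact List.take_subset _ _
  have hysub : y ⊆ w.take N := by
    have h1 : w.take l = w.take k ++ y := by
      rw [hy, ← List.take_add]; congr 1; omega
    have h2 : w.take l = (w.take N).take l := by
      rw [List.take_take]; congr 1; omega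
    intro a ha
    have : a ∈ w.take l := by rw [h1]; exact List.mem_append_right _ ha
    rw [h2] at this
    exact List.take_subset _ _ this
  have hthash : Sym7.hash ∉ Y.reverse ++ (w.take k).reverse := by
    intro hmem'
    rcases List.mem_append.mp hmem' with h | h
    · rw [List.mem_reverse] at h
      obtain ⟨ll, hll, hmm⟩ := List.mem_flatten.mp h
      have := List.eq_of_mem_replicate hll
      subst this
      exact hmem (hysub hmm)
    · exact hmem (hxsub (List.mem_reverse.mp h))
  have htcnt : t.count Sym7.hash = 0 := by
    rw [foldRev_count _ _ _ ht]
    exact List.count_eq_zero.mpr hthash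
  have hscnt : (A ++ t ++ B).count Sym7.hash = 1 := Lpaper_count hsm
  have hABcnt : A.count Sym7.hash + B.count Sym7.hash = 1 := by
    simp [List.count_append, htcnt] at hscnt; omega
  have hsmlen : (A ++ t ++ B).length = wm.length := by
    have h3 := foldRev_length _ _ hfold
    simpa using h3
  have hmle : m ≤ wm.length := by
    have h4 : m * 1 ≤ m * (l - k) := Nat.mul_le_mul_left m (by omega)
    omega
  have hhere : Sym7.hash ∈ A ∨ Sym7.hash ∈ B := by
    rcases Nat.eq_zero_or_pos (A.count Sym7.hash) with h | h
    · right; exact List.count_pos_iff.mp (by omega)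
    · left; exact List.count_pos_iff.mp h
  rcases hsm with ⟨n, hn1, hform⟩ | ⟨n, hn1, hform⟩
  · -- s = aⁿ # (bc)ⁿ
    have hslen : (A ++ t ++ B).length = 3 * n + 1 := by
      rw [hform]; simp [List.map_replicate, List.sum_replicate]; ring
    have hnbig : A.length + B.length < n := by
      have : A.length + t.length + B.length = 3 * n + 1 := by
        have h5 := hslen; simp [List.length_append] at h5; omega
      omega
    rcases hhere with hA | hB
    · have hAeq : A = (A ++ t ++ B).take A.length := by
        rw [List.append_assoc, List.take_left]
      have h1 : (A ++ t ++ B).take A.length = ((A ++ t ++ B).take n).take A.length := by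
        rw [List.take_take]; congr 1; omega
      have h2 : (A ++ t ++ B).take n = List.replicate n Sym7.a := by
        rw [hform, List.append_assoc, List.take_left' (by simp)]
      rw [hAeq, h1, h2] at hA
      have := List.eq_of_mem_replicate (List.take_subset _ _ hA)
      simp at this
    · have hBeq : B = (A ++ t ++ B).drop (A.length + t.length) := by
        exact (List.drop_left' (by simp : (A ++ t).length = A.length + t.length)).symm
      have hqn : n + 1 ≤ A.length + t.length := by
        have : A.length + t.length + B.length = 3 * n + 1 := by
          have h5 := hslen; simp [List.length_append] at h5; omega
        omega
      have h3 : (A ++ t ++ B).drop (A.length + t.length) =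
          ((List.replicate n [Sym7.b, Sym7.c]).flatten).drop (A.length + t.length - (n + 1)) := by
        rw [hform, List.drop_append]
        have hnil : (List.replicate n Sym7.a ++ [Sym7.hash]).drop (A.length + t.length) = [] :=
          List.drop_eq_nil_of_le (by simp; omega)
        simp [hnil]
      rw [hBeq, h3] at hB
      obtain ⟨ll, hll, hmm⟩ := List.mem_flatten.mp (List.drop_subset _ _ hB)
      have := List.eq_of_mem_replicate hll
      subst this
      simp at hmm
  · -- s = (de)ⁿ # fⁿ
    have hslen : (A ++ t ++ B).length = 3 * n + 1 := by
      rw [hform]; simp [List.map_replicate, List.sum_replicate]; ring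
    have hnbig : A.length + B.length < n := by
      have : A.length + t.length + B.length = 3 * n + 1 := by
        have h5 := hslen; simp [List.length_append] at h5; omega
      omega
    rcases hhere with hA | hB
    · have hAeq : A = (A ++ t ++ B).take A.length := by
        rw [List.append_assoc, List.take_left]
      have h1 : (A ++ t ++ B).take A.length = ((A ++ t ++ B).take (2 * n)).take A.length := by
        rw [List.take_take]; congr 1; omega
      have h2 : (A ++ t ++ B).take (2 * n) = (List.replicate n [Sym7.d, Sym7.e]).flatten := by
        rw [hform, List.append_assoc, List.take_left'
          (by simp [List.map_replicate, List.sum_replicate]; ring)]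
      rw [hAeq, h1, h2] at hA
      obtain ⟨ll, hll, hmm⟩ := List.mem_flatten.mp (List.take_subset _ _ hA)
      have := List.eq_of_mem_replicate hll
      subst this
      simp at hmm
    · have hBeq : B = (A ++ t ++ B).drop (A.length + t.length) := by
        exact (List.drop_left' (by simp : (A ++ t).length = A.length + t.length)).symm
      have hqn : 2 * n + 1 ≤ A.length + t.length := by
        have : A.length + t.length + B.length = 3 * n + 1 := by
          have h5 := hslen; simp [List.length_append] at h5; omega
        omega
      have h3 : (A ++ t ++ B).drop (A.length + t.length) =
          (List.replicate n Sym7.f).drop (A.length + t.length - (2 * n + 1)) := by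
        rw [hform, List.drop_append]
        have hnil : ((List.replicate n [Sym7.d, Sym7.e]).flatten ++ [Sym7.hash]).drop
            (A.length + t.length) = [] :=
          List.drop_eq_nil_of_le (by simp [List.map_replicate, List.sum_replicate]; omega)
        simp [hnil]
        omega
      rw [hBeq, h3] at hB
      have := List.eq_of_mem_replicate (List.drop_subset _ _ hB)
      simp at this
end

section
/- The language { aⁿ#(bc)ⁿ : n ≥ 1 } over Σ = {a, b, c, #} belongs to F(REG, REG): there exist regular languages L₁ ⊆ Σ* and L₂ ⊆ {u, d}* such that { h(w, v) : w ∈ L₁, v ∈ L₂, |w| = |v| } = { aⁿ#(bc)ⁿ : n ≥ 1 }. -/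
/-- The alphabet Σ = {a, b, c, #} (`hash` stands for `#`). -/
inductive SymABCH : Type
  | a : SymABCH
  | b : SymABCH
  | c : SymABCH
  | hash : SymABCH
  deriving DecidableEq

open SymABCH FDir List

lemma revFlat {α : Type} (l : List α) (n : ℕ) :
    ((List.replicate n l).flatten).reverse = (List.replicate n l.reverse).flatten := by
  induction n with
  | zero => simp
  | succ n ih =>
      rw [List.replicate_succ, List.replicate_succ' (n := n)]
      simp [ih]

lemma flatLen {α : Type} (l : List α) (n : ℕ) :
    ((List.replicate n l).flatten).length = n * l.length := by
  induction n with
  | zero => simp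
  | succ n ih => rw [List.replicate_succ]; simp [ih]; ring

lemma keyRev (γ : FDir) (n : ℕ) :
    foldRev ((List.replicate n [a, c, b]).flatten ++ [hash])
        ((List.replicate n [up, down, down]).flatten ++ [γ]) =
      some (List.replicate n a ++ [hash] ++ (List.replicate n [b, c]).flatten) := by
  induction n with
  | zero => cases γ <;> simp [foldRev]
  | succ n ih =>
      rw [List.replicate_succ, List.replicate_succ,
        List.replicate_succ (n := n) (a := a), List.replicate_succ' (n := n) (a := ([b,c] : List SymABCH))]
      simp only [List.flatten_cons, List.cons_append, List.append_assoc]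
      simp [foldRev, ih]

lemma keyFold (γ : FDir) (n : ℕ) :
    foldWord (hash :: (List.replicate n [b, c, a]).flatten)
        (γ :: (List.replicate n [down, down, up]).flatten) =
      some (List.replicate n a ++ [hash] ++ (List.replicate n [b, c]).flatten) := by
  unfold foldWord
  rw [List.reverse_cons, List.reverse_cons, revFlat, revFlat]
  exact keyRev γ n

/-- States for the DFA recognizing `#(bca)⁺`. -/
inductive St1 : Type
  | s0 | s1 | s2 | s3 | s4 | dead
  deriving DecidableEq

instance : Fintype St1 :=
  ⟨{.s0, .s1, .s2, .s3, .s4, .dead}, fun x => by cases x <;> simp⟩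

open St1 in
def M1 : DFA SymABCH St1 where
  step q x :=
    match q, x with
    | s0, SymABCH.hash => s1
    | s1, b => s2
    | s2, c => s3
    | s3, a => s4
    | s4, b => s2
    | _, _ => dead
  start := s0
  accept := {s4}

def spec1 : St1 → List SymABCH → Prop
  | .s4, w => ∃ n, w = (List.replicate n [b, c, a]).flatten
  | .s3, w => ∃ n, w = a :: (List.replicate n [b, c, a]).flatten
  | .s2, w => ∃ n, w = c :: a :: (List.replicate n [b, c, a]).flatten
  | .s1, w => ∃ n, w = (List.replicate (n + 1) [b, c, a]).flatten
  | .s0, w => ∃ n, w = hash :: (List.replicate (n + 1) [b, c, a]).flatten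
  | .dead, _ => False

lemma inv1 : ∀ (w : List SymABCH) (q : St1), M1.evalFrom q w = St1.s4 → spec1 q w := by
  intro w
  induction w with
  | nil =>
      intro q h
      have : q = St1.s4 := h
      subst this
      exact ⟨0, by simp⟩
  | cons x w ih =>
      intro q h
      have h' := ih (M1.step q x) h
      cases q <;> cases x <;> simp only [M1, spec1] at h' ⊢ <;> try exact h'.elim
      · obtain ⟨n, rfl⟩ := h'; exact ⟨n, by simp [List.replicate_succ]⟩
      · obtain ⟨n, rfl⟩ := h'; exact ⟨n, by simp [List.replicate_succ]⟩
      · obtain ⟨n, rfl⟩ := h'; exact ⟨n, rfl⟩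
      · obtain ⟨n, rfl⟩ := h'; exact ⟨n, rfl⟩
      · obtain ⟨n, rfl⟩ := h'; exact ⟨n + 1, by simp [List.replicate_succ]⟩

lemma cyc1 : ∀ n : ℕ, M1.evalFrom St1.s4 ((List.replicate n [b, c, a]).flatten) = St1.s4 := by
  intro n
  induction n with
  | zero => rfl
  | succ n ih => rw [List.replicate_succ]; simpa [DFA.evalFrom, M1] using ih

lemma M1_accepts : M1.accepts = { w | ∃ n, w = hash :: (List.replicate (n + 1) [b, c, a]).flatten } := by
  ext w
  constructor
  · intro h
    exact inv1 w M1.start h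
  · rintro ⟨n, rfl⟩
    show M1.evalFrom M1.start _ ∈ M1.accept
    rw [List.replicate_succ]
    have : M1.evalFrom M1.start
        (SymABCH.hash :: ([b, c, a] ++ (List.replicate n [b, c, a]).flatten)) =
        M1.evalFrom St1.s4 ((List.replicate n [b, c, a]).flatten) := rfl
    rw [List.flatten_cons, this, cyc1]
    rfl

/-- States for the DFA recognizing `Γ(ddu)⁺`. -/
inductive St2 : Type
  | t0 | t1 | t2 | t3 | t4 | dead
  deriving DecidableEq

instance : Fintype St2 :=
  ⟨{.t0, .t1, .t2, .t3, .t4, .dead}, fun x => by cases x <;> simp⟩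

open St2 in
def M2 : DFA FDir St2 where
  step q x :=
    match q, x with
    | t0, _ => t1
    | t1, FDir.down => t2
    | t2, FDir.down => t3
    | t3, FDir.up => t4
    | t4, FDir.down => t2
    | _, _ => dead
  start := t0
  accept := {t4}

def spec2 : St2 → List FDir → Prop
  | .t4, w => ∃ n, w = (List.replicate n [down, down, up]).flatten
  | .t3, w => ∃ n, w = up :: (List.replicate n [down, down, up]).flatten
  | .t2, w => ∃ n, w = down :: up :: (List.replicate n [down, down, up]).flatten
  | .t1, w => ∃ n, w = (List.replicate (n + 1) [down, down, up]).flatten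
  | .t0, w => ∃ γ n, w = γ :: (List.replicate (n + 1) [down, down, up]).flatten
  | .dead, _ => False

lemma inv2 : ∀ (w : List FDir) (q : St2), M2.evalFrom q w = St2.t4 → spec2 q w := by
  intro w
  induction w with
  | nil =>
      intro q h
      have : q = St2.t4 := h
      subst this
      exact ⟨0, by simp⟩
  | cons x w ih =>
      intro q h
      have h' := ih (M2.step q x) h
      cases q <;> cases x <;> simp only [M2, spec2] at h' ⊢ <;> try exact h'.elim
      · obtain ⟨n, rfl⟩ := h'; exact ⟨up, n, rfl⟩
      · obtain ⟨n, rfl⟩ := h'; exact ⟨down, n, rfl⟩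
      · obtain ⟨n, rfl⟩ := h'; exact ⟨n, by simp [List.replicate_succ]⟩
      · obtain ⟨n, rfl⟩ := h'; exact ⟨n, rfl⟩
      · obtain ⟨n, rfl⟩ := h'; exact ⟨n, rfl⟩
      · obtain ⟨n, rfl⟩ := h'; exact ⟨n + 1, by simp [List.replicate_succ]⟩

lemma cyc2 : ∀ n : ℕ, M2.evalFrom St2.t4 ((List.replicate n [down, down, up]).flatten) = St2.t4 := by
  intro n
  induction n with
  | zero => rfl
  | succ n ih => rw [List.replicate_succ]; simpa [DFA.evalFrom, M2] using ih

lemma M2_accepts : M2.accepts = { w | ∃ γ n, w = γ :: (List.replicate (n + 1) [down, down, up]).flatten } := by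
  ext w
  constructor
  · intro h
    exact inv2 w M2.start h
  · rintro ⟨γ, n, rfl⟩
    show M2.evalFrom M2.start _ ∈ M2.accept
    rw [List.replicate_succ]
    have : M2.evalFrom M2.start
        (γ :: ([down, down, up] ++ (List.replicate n [down, down, up]).flatten)) =
        M2.evalFrom St2.t4 ((List.replicate n [down, down, up]).flatten) := by
      cases γ <;> rfl
    rw [List.flatten_cons, this, cyc2]
    rfl


/-- The language `{ aⁿ#(bc)ⁿ : n ≥ 1 }` belongs to F(REG, REG): there exist regular
languages `L₁ ⊆ Σ*` and `L₂ ⊆ Γ*` such that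
`{ h(w, v) : w ∈ L₁, v ∈ L₂, |w| = |v| } = { aⁿ#(bc)ⁿ : n ≥ 1 }`. -/
theorem anbcn_mem_fsystem :
    ∃ (L₁ : Language SymABCH) (L₂ : Language FDir),
      L₁.IsRegular ∧ L₂.IsRegular ∧
      FLang L₁ L₂ = { s | ∃ n : ℕ, 1 ≤ n ∧
        s = List.replicate n SymABCH.a ++ [SymABCH.hash] ++
            (List.replicate n [SymABCH.b, SymABCH.c]).flatten } := by
  refine ⟨{ w | ∃ n, w = SymABCH.hash :: (List.replicate (n + 1) [b, c, a]).flatten },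
    { v | ∃ γ n, v = γ :: (List.replicate (n + 1) [down, down, up]).flatten },
    ⟨St1, inferInstance, M1, M1_accepts⟩, ⟨St2, inferInstance, M2, M2_accepts⟩, ?_⟩
  ext s
  simp only [FLang, Set.mem_setOf_eq]
  constructor
  · rintro ⟨w, ⟨n, rfl⟩, v, ⟨γ, m, rfl⟩, hlen, hfold⟩
    simp only [List.length_cons, flatLen, List.length_cons, List.length_nil] at hlen
    have hnm : n = m := by omega
    subst hnm
    rw [keyFold γ (n + 1)] at hfold
    refine ⟨n + 1, by omega, ?_⟩
    exact (Option.some_inj.mp hfold).symm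
  · rintro ⟨n, hn, rfl⟩
    obtain ⟨k, rfl⟩ : ∃ k, n = k + 1 := ⟨n - 1, by omega⟩
    exact ⟨SymABCH.hash :: (List.replicate (k + 1) [b, c, a]).flatten, ⟨k, rfl⟩,
      up :: (List.replicate (k + 1) [down, down, up]).flatten, ⟨up, k, rfl⟩,
      by simp [flatLen], keyFold up (k + 1)⟩
end

section
/- Every regular language belongs to F(REG, REG): for any regular language L ⊆ Σ*, taking L₁ = L and L₂ = d* gives { h(w, v) : w ∈ L₁, v ∈ L₂, |w| = |v| } = L; consequently REG ⊆ F(REG, REG). Moreover the containment is proper, since { aⁿ(bc)ⁿ : n ≥ 0 } ∈ F(REG, REG) is not regular. -/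
/-- The folding procedure language `d*`. -/
def DStar : Language FDir := { v | ∃ n : ℕ, v = List.replicate n FDir.down }

/-- The language `{ aⁿ(bc)ⁿ : n ≥ 0 }`. -/
def AnBCn : Language SymABC :=
  { s | ∃ n : ℕ,
      s = List.replicate n SymABC.a ++ (List.replicate n [SymABC.b, SymABC.c]).flatten }

namespace RegFoldAux

open List

/-! ### Folding with all-`down` is the identity -/

theorem foldRev_rep_down {α : Type} (l : List α) :
    foldRev l (List.replicate l.length FDir.down) = some l.reverse := by
  induction l with
  | nil => rfl
  | cons a l ih => simp [foldRev, List.replicate_succ, ih]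

theorem foldRev_rep_down' {α : Type} :
    ∀ {l : List α} {n : ℕ} {s : List α},
      foldRev l (List.replicate n FDir.down) = some s → s = l.reverse := by
  intro l
  induction l with
  | nil =>
    intro n s h
    cases n with
    | zero => simpa [foldRev] using h.symm
    | succ n => simp [List.replicate_succ, foldRev] at h
  | cons a l ih =>
    intro n s h
    cases n with
    | zero => simp [foldRev] at h
    | succ n =>
      simp only [List.replicate_succ, foldRev, Option.map_eq_some_iff] at h
      obtain ⟨t, ht, rfl⟩ := h
      simp [ih ht]

theorem flang_dstar {α : Type} (L : Language α) : FLang L DStar = L := by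
  ext s
  constructor
  · rintro ⟨w, hw, v, ⟨n, rfl⟩, _, hfold⟩
    have : s = w.reverse.reverse := by
      apply foldRev_rep_down' (l := w.reverse) (n := n)
      simpa [foldWord, List.reverse_replicate] using hfold
    rw [this, List.reverse_reverse]; exact hw
  · intro hs
    refine ⟨s, hs, List.replicate s.length FDir.down, ⟨s.length, rfl⟩, by simp, ?_⟩
    have := foldRev_rep_down (l := s.reverse)
    simpa [foldWord, List.reverse_replicate] using this

/-! ### A DFA for `x*` -/

def repDFA {α : Type} [DecidableEq α] (x : α) : DFA α Bool where
  step s y := s && decide (y = x)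
  start := true
  accept := {s | s = true}

theorem repDFA_false {α : Type} [DecidableEq α] (x : α) :
    ∀ w : List α, (repDFA x).evalFrom false w = false := by
  intro w
  induction w with
  | nil => rfl
  | cons a w ih => simpa [DFA.evalFrom, repDFA] using ih

theorem repDFA_correct {α : Type} [DecidableEq α] (x : α) :
    ∀ w : List α, (repDFA x).evalFrom true w = true ↔ ∃ n, w = List.replicate n x := by
  intro w
  induction w with
  | nil =>
    simp only [DFA.evalFrom_nil]
    constructor
    · intro _; exact ⟨0, rfl⟩
    · intro _; trivial
  | cons a w ih =>
    by_cases hax : a = x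
    · subst hax
      have hstep : (repDFA a).evalFrom true (a :: w) = (repDFA a).evalFrom true w := by
        simp [DFA.evalFrom, repDFA]
      rw [hstep, ih]
      constructor
      · rintro ⟨n, rfl⟩; exact ⟨n + 1, by simp [List.replicate_succ]⟩
      · rintro ⟨n, hn⟩
        cases n with
        | zero => simp at hn
        | succ n =>
          simp only [List.replicate_succ, List.cons.injEq] at hn
          exact ⟨n, hn.2⟩
    · have hstep : (repDFA x).evalFrom true (a :: w) = (repDFA x).evalFrom false w := by
        simp [DFA.evalFrom, repDFA, hax]
      rw [hstep, repDFA_false]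
      constructor
      · intro h; exact absurd h (by simp)
      · rintro ⟨n, hn⟩
        cases n with
        | zero => simp at hn
        | succ n =>
          simp only [List.replicate_succ, List.cons.injEq] at hn
          exact absurd hn.1 hax

theorem rep_regular {α : Type} [DecidableEq α] (x : α) :
    Language.IsRegular {w : List α | ∃ n, w = List.replicate n x} := by
  refine ⟨Bool, inferInstance, repDFA x, ?_⟩
  ext w
  rw [DFA.mem_accepts]
  show (repDFA x).evalFrom true w ∈ {s | s = true} ↔ _
  exact repDFA_correct x w

theorem dstar_regular : DStar.IsRegular := rep_regular FDir.down

/-! ### A DFA for `(xyz)*` -/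

inductive St3 : Type
  | s0 | s1 | s2 | dd
  deriving DecidableEq

instance : Fintype St3 :=
  ⟨{St3.s0, St3.s1, St3.s2, St3.dd}, fun x => by cases x <;> simp⟩

def J {α : Type} (x y z : α) : ℕ → List α
  | 0 => []
  | n + 1 => x :: y :: z :: J x y z n

theorem J_eq {α : Type} (x y z : α) (n : ℕ) :
    J x y z n = (List.replicate n [x, y, z]).flatten := by
  induction n with
  | zero => rfl
  | succ n ih => simp [J, List.replicate_succ, ih]

theorem length_J {α : Type} (x y z : α) (n : ℕ) : (J x y z n).length = 3 * n := by
  induction n with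
  | zero => rfl
  | succ n ih => simp [J, ih]; ring

def cycDFA {α : Type} [DecidableEq α] (x y z : α) : DFA α St3 where
  step s c :=
    match s with
    | St3.s0 => if c = x then St3.s1 else St3.dd
    | St3.s1 => if c = y then St3.s2 else St3.dd
    | St3.s2 => if c = z then St3.s0 else St3.dd
    | St3.dd => St3.dd
  start := St3.s0
  accept := {s | s = St3.s0}

theorem cycDFA_dead {α : Type} [DecidableEq α] (x y z : α) :
    ∀ w : List α, (cycDFA x y z).evalFrom St3.dd w = St3.dd := by
  intro w
  induction w with
  | nil => rfl
  | cons a w ih => simpa [DFA.evalFrom, cycDFA] using ih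

theorem cycDFA_correct {α : Type} [DecidableEq α] (x y z : α) :
    ∀ w : List α,
      ((cycDFA x y z).evalFrom St3.s0 w = St3.s0 ↔ ∃ n, w = J x y z n) ∧
      ((cycDFA x y z).evalFrom St3.s1 w = St3.s0 ↔ ∃ n, w = y :: z :: J x y z n) ∧
      ((cycDFA x y z).evalFrom St3.s2 w = St3.s0 ↔ ∃ n, w = z :: J x y z n) := by
  intro w
  induction w with
  | nil =>
    refine ⟨?_, ?_, ?_⟩
    · simp only [DFA.evalFrom_nil]
      constructor
      · intro _; exact ⟨0, rfl⟩
      · intro _; trivial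
    · simp only [DFA.evalFrom_nil]
      constructor
      · intro h; cases h
      · rintro ⟨n, hn⟩; cases hn
    · simp only [DFA.evalFrom_nil]
      constructor
      · intro h; cases h
      · rintro ⟨n, hn⟩; cases hn
  | cons a w ih =>
    obtain ⟨ih0, ih1, ih2⟩ := ih
    have hstep : ∀ s : St3,
        (cycDFA x y z).evalFrom s (a :: w) =
          (cycDFA x y z).evalFrom ((cycDFA x y z).step s a) w := by
      intro s; rfl
    refine ⟨?_, ?_, ?_⟩
    · rw [hstep]
      by_cases hax : a = x
      · subst hax
        have : (cycDFA a y z).step St3.s0 a = St3.s1 := by simp [cycDFA]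
        rw [this, ih1]
        constructor
        · rintro ⟨n, rfl⟩; exact ⟨n + 1, rfl⟩
        · rintro ⟨n, hn⟩
          cases n with
          | zero => cases hn
          | succ n =>
            simp only [J, List.cons.injEq] at hn
            exact ⟨n, hn.2⟩
      · have : (cycDFA x y z).step St3.s0 a = St3.dd := by simp [cycDFA, hax]
        rw [this, cycDFA_dead]
        constructor
        · intro h; cases h
        · rintro ⟨n, hn⟩
          cases n with
          | zero => cases hn
          | succ n =>
            simp only [J, List.cons.injEq] at hn
            exact absurd hn.1 hax
    · rw [hstep]
      by_cases hay : a = y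
      · subst hay
        have : (cycDFA x a z).step St3.s1 a = St3.s2 := by simp [cycDFA]
        rw [this, ih2]
        constructor
        · rintro ⟨n, rfl⟩; exact ⟨n, rfl⟩
        · rintro ⟨n, hn⟩
          simp only [List.cons.injEq] at hn
          exact ⟨n, hn.2⟩
      · have : (cycDFA x y z).step St3.s1 a = St3.dd := by simp [cycDFA, hay]
        rw [this, cycDFA_dead]
        constructor
        · intro h; cases h
        · rintro ⟨n, hn⟩
          simp only [List.cons.injEq] at hn
          exact absurd hn.1 hay
    · rw [hstep]
      by_cases haz : a = z
      · subst haz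
        have : (cycDFA x y a).step St3.s2 a = St3.s0 := by simp [cycDFA]
        rw [this, ih0]
        constructor
        · rintro ⟨n, rfl⟩; exact ⟨n, rfl⟩
        · rintro ⟨n, hn⟩
          simp only [List.cons.injEq] at hn
          exact ⟨n, hn.2⟩
      · have : (cycDFA x y z).step St3.s2 a = St3.dd := by simp [cycDFA, haz]
        rw [this, cycDFA_dead]
        constructor
        · intro h; cases h
        · rintro ⟨n, hn⟩
          simp only [List.cons.injEq] at hn
          exact absurd hn.1 haz

theorem cyc_regular {α : Type} [DecidableEq α] (x y z : α) :
    Language.IsRegular {w : List α | ∃ n, w = J x y z n} := by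
  refine ⟨St3, inferInstance, cycDFA x y z, ?_⟩
  ext w
  rw [DFA.mem_accepts]
  show (cycDFA x y z).evalFrom St3.s0 w ∈ {s | s = St3.s0} ↔ _
  exact (cycDFA_correct x y z w).1

/-! ### Folding `(abc)ⁿ` with `(udd)ⁿ` yields `aⁿ(bc)ⁿ` -/

theorem reverse_J {α : Type} (x y z : α) (n : ℕ) :
    (J x y z n).reverse = J z y x n := by
  rw [J_eq, J_eq, List.reverse_flatten]
  congr 1
  simp [List.reverse_replicate]

theorem foldRev_key (n : ℕ) :
    foldRev (J SymABC.c SymABC.b SymABC.a n) (J FDir.down FDir.down FDir.up n) =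
      some (List.replicate n SymABC.a ++ (List.replicate n [SymABC.b, SymABC.c]).flatten) := by
  induction n with
  | zero => rfl
  | succ n ih =>
    simp only [J, foldRev, ih, Option.map_some]
    congr 1
    rw [List.replicate_succ, List.replicate_succ' (n := n) (a := [SymABC.b, SymABC.c])]
    simp

theorem foldWord_key (n : ℕ) :
    foldWord (J SymABC.a SymABC.b SymABC.c n) (J FDir.up FDir.down FDir.down n) =
      some (List.replicate n SymABC.a ++ (List.replicate n [SymABC.b, SymABC.c]).flatten) := by
  rw [foldWord, reverse_J, reverse_J]
  exact foldRev_key n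

theorem flang_anbcn :
    FLang {w : List SymABC | ∃ n, w = J SymABC.a SymABC.b SymABC.c n}
        {v : List FDir | ∃ n, v = J FDir.up FDir.down FDir.down n} = AnBCn := by
  ext s
  constructor
  · rintro ⟨w, ⟨m, rfl⟩, v, ⟨n, rfl⟩, hlen, hfold⟩
    rw [length_J, length_J] at hlen
    have hmn : m = n := by omega
    subst hmn
    rw [foldWord_key] at hfold
    exact ⟨m, (Option.some.inj hfold).symm⟩
  · rintro ⟨n, rfl⟩
    exact ⟨J SymABC.a SymABC.b SymABC.c n, ⟨n, rfl⟩,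
      J FDir.up FDir.down FDir.down n, ⟨n, rfl⟩,
      by rw [length_J, length_J], foldWord_key n⟩

/-! ### `AnBCn` is not regular -/

theorem count_a_bc (n : ℕ) :
    ((List.replicate n [SymABC.b, SymABC.c]).flatten).count SymABC.a = 0 := by
  induction n with
  | zero => rfl
  | succ n ih => simp [List.replicate_succ, List.count_cons, ih]

theorem length_bc (n : ℕ) :
    ((List.replicate n [SymABC.b, SymABC.c]).flatten).length = 2 * n := by
  induction n with
  | zero => rfl
  | succ n ih => simp [List.replicate_succ, ih]; ring

theorem mem_anbcn_count {s : List SymABC} (hs : s ∈ AnBCn) :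
    3 * s.count SymABC.a = s.length := by
  obtain ⟨n, rfl⟩ := hs
  simp [List.count_append, count_a_bc, length_bc, List.count_replicate]
  ring

theorem anbcn_not_regular : ¬ AnBCn.IsRegular := by
  rintro ⟨σ, fσ, M, hM⟩
  set N := Fintype.card σ with hN
  set x : List SymABC :=
    List.replicate N SymABC.a ++ (List.replicate N [SymABC.b, SymABC.c]).flatten with hx
  have hxmem : x ∈ M.accepts := by rw [hM]; exact ⟨N, rfl⟩
  have hxlen : N ≤ x.length := by
    rw [hx]; simp [length_bc]
  obtain ⟨p, q, r, hsplit, hlen, hq, hpump⟩ := M.pumping_lemma hxmem hxlen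
  -- q consists only of `a`s
  have hpq : p ++ q = List.replicate (p.length + q.length) SymABC.a := by
    have h1 : p ++ q = x.take (p.length + q.length) := by
      rw [hsplit]
      simp [List.take_append]
    rw [h1, hx, List.take_append_of_le_length (by simp; omega),
      List.take_replicate, min_eq_left hlen]
  have hqa : q = List.replicate q.length SymABC.a := by
    have := congrArg (List.drop p.length) hpq
    simpa [List.drop_replicate] using this
  -- the pumped word
  have hy : p ++ (q ++ q) ++ r ∈ M.accepts := by
    apply hpump
    refine ⟨p ++ (q ++ q), ?_, r, rfl, rfl⟩
    refine ⟨p, rfl, q ++ q, ?_, rfl⟩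
    refine ⟨[q, q], by simp, ?_⟩
    intro y hy
    simp only [List.mem_cons, List.not_mem_nil, or_false, List.mem_singleton] at hy
    rcases hy with rfl | rfl <;> rfl
  rw [hM] at hy
  have hcount := mem_anbcn_count hy
  have hxcount : x.count SymABC.a = N := by
    rw [hx]; simp [List.count_append, count_a_bc, List.count_replicate]
  have hycount : (p ++ (q ++ q) ++ r).count SymABC.a = N + q.length := by
    have hqcount : q.count SymABC.a = q.length := by
      conv_lhs => rw [hqa]
      simp [List.count_replicate]
    have : x.count SymABC.a = p.count SymABC.a + q.count SymABC.a + r.count SymABC.a := by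
      rw [hsplit]; simp [List.count_append]; ring
    simp only [List.count_append]
    omega
  have hylen : (p ++ (q ++ q) ++ r).length = x.length + q.length := by
    rw [hsplit]; simp; omega
  have hxlen3 : x.length = 3 * N := by
    rw [hx]; simp [length_bc]; ring
  have hq0 : q.length ≠ 0 := fun h => hq (List.eq_nil_of_length_eq_zero h)
  omega

end RegFoldAux

/-- Every regular language belongs to F(REG, REG): for any regular `L`, taking
`L₁ = L` and `L₂ = d*` gives `L(Φ) = L`, hence REG ⊆ F(REG, REG).  Moreover the
containment is proper: `{ aⁿ(bc)ⁿ : n ≥ 0 }` belongs to F(REG, REG) but is not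
regular. -/
theorem reg_ssubset_fsystem :
    (∀ (α : Type) (L : Language α), L.IsRegular → FLang L DStar = L) ∧
    (∀ (α : Type) (L : Language α), L.IsRegular →
        ∃ (L₁ : Language α) (L₂ : Language FDir),
          L₁.IsRegular ∧ L₂.IsRegular ∧ FLang L₁ L₂ = L) ∧
    (∃ (L₁ : Language SymABC) (L₂ : Language FDir),
        L₁.IsRegular ∧ L₂.IsRegular ∧ FLang L₁ L₂ = AnBCn) ∧
    ¬ AnBCn.IsRegular := by
  refine ⟨fun α L _ => RegFoldAux.flang_dstar L, ?_, ?_, RegFoldAux.anbcn_not_regular⟩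
  · intro α L hL
    exact ⟨L, DStar, hL, RegFoldAux.dstar_regular, RegFoldAux.flang_dstar L⟩
  · exact ⟨{w | ∃ n, w = RegFoldAux.J SymABC.a SymABC.b SymABC.c n},
      {v | ∃ n, v = RegFoldAux.J FDir.up FDir.down FDir.down n},
      RegFoldAux.cyc_regular _ _ _, RegFoldAux.cyc_regular _ _ _, RegFoldAux.flang_anbcn⟩
end
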